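/- arXiv:2505.04351 — 3 statements merged into one kernel-verified Lean document; each statement's English description precedes it below -/
import Mathlib

section
/- There exists a constant C>0 such that for all smooth compactly supported functions f, g, h : ℝ³ → ℝ, ∫_{ℝ³}|f(x)g(x)h(x)| dx ≤ C ‖f‖_{L²}^{1/2}‖∂₁f‖_{L²}^{1/2} ‖g‖_{L²}^{1/2}‖∂₂g‖_{L²}^{1/2} ‖h‖_{L²}^{1/2}‖∂₃h‖_{L²}^{1/2}. -/
open MeasureTheory Real Filter

noncomputable section

/-- Euclidean space `ℝ³`. -/
abbrev E3 : Type := EuclideanSpace ℝ (Fin 3)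

/-- The partial derivative `∂ᵢ f` in the `i`-th coordinate direction. -/
def pd {F : Type*} [NormedAddCommGroup F] [NormedSpace ℝ F] (i : Fin 3) (f : E3 → F) : E3 → F :=
  fun x => fderiv ℝ f x (EuclideanSpace.single i 1)

/-- Iterated partial derivative `∂^γ` along a list of coordinate directions. -/
def pdL {F : Type*} [NormedAddCommGroup F] [NormedSpace ℝ F] : List (Fin 3) → (E3 → F) → (E3 → F)
  | [], f => f
  | i :: l, f => pd i (pdL l f)

/-- The squared `L²` norm `∫ |f|² dx`. -/
def L2sq {F : Type*} [NormedAddCommGroup F] (f : E3 → F) : ℝ := ∫ x : E3, ‖f x‖ ^ 2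

/-- The `L²` norm. -/
def L2norm {F : Type*} [NormedAddCommGroup F] (f : E3 → F) : ℝ := Real.sqrt (L2sq f)

/-- The squared `Hᵐ` Sobolev norm `Σ_{k≤m} ∫ |∇^k f|² dx`. -/
def HsobSq {F : Type*} [NormedAddCommGroup F] [NormedSpace ℝ F] (m : ℕ) (f : E3 → F) : ℝ :=
  ∑ k ∈ Finset.range (m + 1), ∫ x : E3, ‖iteratedFDeriv ℝ k f x‖ ^ 2

/-- The `Hᵐ` Sobolev norm. -/
def Hsob {F : Type*} [NormedAddCommGroup F] [NormedSpace ℝ F] (m : ℕ) (f : E3 → F) : ℝ :=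
  Real.sqrt (HsobSq m f)

/-- `‖∇f‖²_{Hᵐ} = Σᵢ ‖∂ᵢf‖²_{Hᵐ}`. -/
def gradHSq {F : Type*} [NormedAddCommGroup F] [NormedSpace ℝ F] (m : ℕ) (f : E3 → F) : ℝ :=
  ∑ i : Fin 3, HsobSq m (pd i f)

/-- `‖∇f‖_{Hᵐ}`. -/
def gradH {F : Type*} [NormedAddCommGroup F] [NormedSpace ℝ F] (m : ℕ) (f : E3 → F) : ℝ :=
  Real.sqrt (gradHSq m f)

/-- `‖∇_h f‖²_{Hᵐ} = ‖∂₁f‖²_{Hᵐ} + ‖∂₂f‖²_{Hᵐ}`. -/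
def gradhHSq {F : Type*} [NormedAddCommGroup F] [NormedSpace ℝ F] (m : ℕ) (f : E3 → F) : ℝ :=
  HsobSq m (pd 0 f) + HsobSq m (pd 1 f)

/-- `‖∇_h f‖_{Hᵐ}`. -/
def gradhH {F : Type*} [NormedAddCommGroup F] [NormedSpace ℝ F] (m : ℕ) (f : E3 → F) : ℝ :=
  Real.sqrt (gradhHSq m f)

/-- Dot product on `ℝ³`. -/
def dot3 (v w : E3) : ℝ := ∑ i, v i * w i

/-- Divergence of a vector field. -/
def div3 (u : E3 → E3) : E3 → ℝ := fun x => ∑ i, pd i u x i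

/-- `(v·∇)f` for a scalar function `f`. -/
def advS (v : E3 → E3) (f : E3 → ℝ) : E3 → ℝ := fun x => ∑ i, v x i * pd i f x

/-- `(v·∇)w` for a vector field `w`. -/
def adv (v w : E3 → E3) : E3 → E3 := fun x => ∑ i, v x i • pd i w x

/-- The vector `(p,q,r) ∈ ℝ³`. -/
def vec3 (p q r : ℝ) : E3 := (WithLp.equiv 2 (Fin 3 → ℝ)).symm ![p, q, r]

/-- Gradient of a scalar function. -/
def grad3 (f : E3 → ℝ) : E3 → E3 := fun x => vec3 (pd 0 f x) (pd 1 f x) (pd 2 f x)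

/-- Laplacian `Δ = ∂₁² + ∂₂² + ∂₃²`. -/
def lap3 {F : Type*} [NormedAddCommGroup F] [NormedSpace ℝ F] (f : E3 → F) : E3 → F :=
  fun x => ∑ i, pd i (pd i f) x

/-- Horizontal Laplacian `Δ_h = ∂₁² + ∂₂²`. -/
def laph3 {F : Type*} [NormedAddCommGroup F] [NormedSpace ℝ F] (f : E3 → F) : E3 → F :=
  fun x => pd 0 (pd 0 f) x + pd 1 (pd 1 f) x

/-- Curl of a vector field on `ℝ³`. -/
def curl3 (B : E3 → E3) : E3 → E3 := fun x =>
  vec3 (pd 1 B x 2 - pd 2 B x 1) (pd 2 B x 0 - pd 0 B x 2) (pd 0 B x 1 - pd 1 B x 0)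

/-- Cross product on `ℝ³`. -/
def cross3 (a b : E3) : E3 :=
  vec3 (a 1 * b 2 - a 2 * b 1) (a 2 * b 0 - a 0 * b 2) (a 0 * b 1 - a 1 * b 0)

namespace AnisoAux

open scoped ENNReal

/-- The linear coordinates map `ℝ × ℝ × ℝ → ℝ³`. -/
def V3 : ℝ × ℝ × ℝ → E3 := fun p => vec3 p.1 p.2.1 p.2.2

lemma continuous_V3 : Continuous V3 := by
  apply (PiLp.continuous_toLp (p := 2) (β := fun _ : Fin 3 => ℝ)).comp
  apply continuous_pi
  intro i
  fin_cases i <;> simp <;> fun_prop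

/-- The coordinates measurable equivalence. -/
def M3 : E3 ≃ᵐ ℝ × ℝ × ℝ :=
  (MeasurableEquiv.toLp 2 (Fin 3 → ℝ)).symm.trans
    ((MeasurableEquiv.piFinSuccAbove (fun _ => ℝ) 0).trans
      ((MeasurableEquiv.refl ℝ).prodCongr MeasurableEquiv.finTwoArrow))

lemma M3_symm_eq : (M3.symm : ℝ × ℝ × ℝ → E3) = V3 := by
  funext p
  show (WithLp.equiv 2 (Fin 3 → ℝ)).symm _ = _
  unfold V3 vec3
  congr 1
  ext i
  fin_cases i <;> rfl

lemma mp_V3 : MeasurePreserving V3 (volume : Measure (ℝ × ℝ × ℝ)) (volume : Measure E3) := by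
  have h : MeasurePreserving M3 volume volume :=
    (EuclideanSpace.volume_preserving_symm_measurableEquiv_toLp (Fin 3)).trans
      (((volume_preserving_piFinSuccAbove (fun _ : Fin 3 => ℝ) 0)).trans
        ((MeasurePreserving.id volume).prod (volume_preserving_finTwoArrow ℝ)))
  have := h.symm M3
  rwa [M3_symm_eq] at this

lemma lint_comp {φ : E3 → ℝ≥0∞} (hφ : Measurable φ) :
    ∫⁻ p : ℝ × ℝ × ℝ, φ (V3 p) = ∫⁻ x : E3, φ x :=
  mp_V3.lintegral_comp hφ

lemma vec3_add_single0 (a b c t : ℝ) :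
    vec3 a b c + t • EuclideanSpace.single (0 : Fin 3) (1:ℝ) = vec3 (a + t) b c := by
  ext j
  fin_cases j <;>
    simp [vec3, PiLp.toLp_apply, EuclideanSpace.single_apply, PiLp.add_apply,
      PiLp.smul_apply]

lemma vec3_add_single1 (a b c t : ℝ) :
    vec3 a b c + t • EuclideanSpace.single (1 : Fin 3) (1:ℝ) = vec3 a (b + t) c := by
  ext j
  fin_cases j <;>
    simp [vec3, PiLp.toLp_apply, EuclideanSpace.single_apply, PiLp.add_apply,
      PiLp.smul_apply]

lemma vec3_add_single2 (a b c t : ℝ) :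
    vec3 a b c + t • EuclideanSpace.single (2 : Fin 3) (1:ℝ) = vec3 a b (c + t) := by
  ext j
  fin_cases j <;>
    simp [vec3, PiLp.toLp_apply, EuclideanSpace.single_apply, PiLp.add_apply,
      PiLp.smul_apply]

lemma pd_continuous {f : E3 → ℝ} (hf : ContDiff ℝ (⊤ : ℕ∞) f) (i : Fin 3) : Continuous (pd i f) :=
  (hf.continuous_fderiv (by simp)).clm_apply continuous_const

lemma pd_hcs {f : E3 → ℝ} (hs : HasCompactSupport f) (i : Fin 3) :
    HasCompactSupport (pd i f) :=
  (hs.fderiv ℝ).comp_left (g := fun (L : E3 →L[ℝ] ℝ) => L (EuclideanSpace.single i 1)) rfl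

/-- Cauchy–Schwarz for the Lebesgue integral. -/
lemma CS {α : Type*} [MeasurableSpace α] (μ : Measure α) {a b : α → ℝ≥0∞}
    (ha : AEMeasurable a μ) (hb : AEMeasurable b μ) :
    ∫⁻ x, a x ^ ((1:ℝ)/2) * b x ^ ((1:ℝ)/2) ∂μ ≤
      (∫⁻ x, a x ∂μ) ^ ((1:ℝ)/2) * (∫⁻ x, b x ∂μ) ^ ((1:ℝ)/2) := by
  have hpq : Real.HolderConjugate 2 2 := Real.HolderConjugate.two_two
  have ha' : AEMeasurable (fun x => a x ^ ((1:ℝ)/2)) μ :=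
    (ENNReal.continuous_rpow_const.measurable).comp_aemeasurable ha
  have hb' : AEMeasurable (fun x => b x ^ ((1:ℝ)/2)) μ :=
    (ENNReal.continuous_rpow_const.measurable).comp_aemeasurable hb
  have h := ENNReal.lintegral_mul_le_Lp_mul_Lq μ hpq ha' hb'
  have e : ∀ c : ℝ≥0∞, (c ^ ((1:ℝ)/2)) ^ (2:ℝ) = c := fun c => by
    rw [← ENNReal.rpow_mul]; norm_num
  simpa only [Pi.mul_apply, e] using h

lemma ofReal_sq (x : ℝ) : ENNReal.ofReal (x ^ 2) = (ENNReal.ofReal |x|) ^ (2:ℝ) := by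
  rw [← sq_abs x, ENNReal.ofReal_pow (abs_nonneg x), ← ENNReal.rpow_natCast]
  norm_num

lemma ofReal_abs (x : ℝ) : ENNReal.ofReal |x| = (ENNReal.ofReal (x ^ 2)) ^ ((1:ℝ)/2) := by
  rw [ofReal_sq, ← ENNReal.rpow_mul]
  norm_num

end AnisoAux

open scoped ENNReal
namespace AnisoAux

lemma line_bound (f : E3 → ℝ) (hf : ContDiff ℝ (⊤ : ℕ∞) f) (hs : HasCompactSupport f)
    (i : Fin 3) (c : ℝ → E3) (hc : ∀ t, c t = c 0 + t • EuclideanSpace.single i 1) (a : ℝ) :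
    ENNReal.ofReal ((f (c a)) ^ 2) ≤ 2 * ∫⁻ t, ENNReal.ofReal |f (c t) * pd i f (c t)| := by
  classical
  have hcont_c : Continuous c := by
    have : c = fun t => c 0 + t • EuclideanSpace.single i 1 := funext hc
    rw [this]; fun_prop
  have hc' : ∀ t, HasDerivAt c (EuclideanSpace.single i 1) t := by
    intro t
    have : HasDerivAt (fun s : ℝ => c 0 + s • EuclideanSpace.single i (1:ℝ))
        ((1:ℝ) • EuclideanSpace.single i (1:ℝ)) t :=
      ((hasDerivAt_id t).smul_const _).const_add _
    simp only [one_smul] at this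
    exact this.congr_of_eventuallyEq (Filter.Eventually.of_forall fun s => (hc s))
  have hφd : ∀ t, HasDerivAt (fun t => f (c t)) (pd i f (c t)) t := fun t =>
    ((hf.differentiable (by simp) (c t)).hasFDerivAt).comp_hasDerivAt t (hc' t)
  set ψ : ℝ → ℝ := fun t => (f (c t)) ^ 2 with hψ
  have hψd : ∀ t, HasDerivAt ψ (2 * f (c t) * pd i f (c t)) t := by
    intro t
    have := (hφd t).pow 2
    simpa [mul_comm, mul_assoc, mul_left_comm, hψ, Pi.pow_def] using this
  have hψ'cont : Continuous fun t => 2 * f (c t) * pd i f (c t) :=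
    ((continuous_const.mul (hf.continuous.comp hcont_c)).mul
      ((pd_continuous hf i).comp hcont_c))
  obtain ⟨L, hL⟩ : ∃ L : ℝ, ∀ x ∈ tsupport f, L ≤ x i := by
    have hbdd : BddBelow ((fun x : E3 => x i) '' tsupport f) :=
      (hs.image ((continuous_apply i).comp
        (PiLp.continuous_ofLp (p := 2) (β := fun _ : Fin 3 => ℝ)))).bddBelow
    obtain ⟨L, hL⟩ := hbdd
    exact ⟨L, fun x hx => hL ⟨x, hx, rfl⟩⟩
  set b : ℝ := min a (L - c 0 i - 1) with hb
  have hba : b ≤ a := min_le_left _ _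
  have hfb : f (c b) = 0 := by
    have hci : c b i = c 0 i + b := by
      rw [hc b]; simp [EuclideanSpace.single_apply]
    have hnm : c b ∉ tsupport f := by
      intro hmem
      have h1 := hL _ hmem
      have h2 : b ≤ L - c 0 i - 1 := min_le_right _ _
      rw [hci] at h1
      linarith
    exact image_eq_zero_of_notMem_tsupport hnm
  have hFTC : ∫ t in b..a, (2 * f (c t) * pd i f (c t)) = ψ a - ψ b :=
    intervalIntegral.integral_eq_sub_of_hasDerivAt (fun t _ => hψd t)
      (hψ'cont.intervalIntegrable b a)
  have hψb : ψ b = 0 := by simp [hψ, hfb]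
  have h1 : ψ a ≤ ∫ t in b..a, |2 * f (c t) * pd i f (c t)| := by
    calc ψ a = |∫ t in b..a, (2 * f (c t) * pd i f (c t))| := by
          rw [hFTC, hψb, sub_zero]; exact (abs_of_nonneg (sq_nonneg _)).symm
      _ ≤ ∫ t in b..a, |2 * f (c t) * pd i f (c t)| :=
          intervalIntegral.abs_integral_le_integral_abs hba
  have h2 : (∫ t in b..a, |2 * f (c t) * pd i f (c t)|) =
      ∫ t in Set.Ioc b a, |2 * f (c t) * pd i f (c t)| :=
    intervalIntegral.integral_of_le hba
  have habs : ∀ t, |2 * f (c t) * pd i f (c t)| = 2 * |f (c t) * pd i f (c t)| := by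
    intro t; rw [mul_assoc, abs_mul]; simp
  have h3 : ENNReal.ofReal (∫ t in Set.Ioc b a, |2 * f (c t) * pd i f (c t)|) =
      ∫⁻ t in Set.Ioc b a, ENNReal.ofReal |2 * f (c t) * pd i f (c t)| := by
    apply MeasureTheory.ofReal_integral_eq_lintegral_ofReal
    · exact (hψ'cont.abs.integrableOn_Icc).mono_set Set.Ioc_subset_Icc_self
    · exact Filter.Eventually.of_forall fun t => abs_nonneg _
  calc ENNReal.ofReal ((f (c a))^2) ≤
      ENNReal.ofReal (∫ t in Set.Ioc b a, |2 * f (c t) * pd i f (c t)|) := by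
        apply ENNReal.ofReal_le_ofReal; rw [← h2]; exact h1
    _ = ∫⁻ t in Set.Ioc b a, ENNReal.ofReal |2 * f (c t) * pd i f (c t)| := h3
    _ ≤ ∫⁻ t, ENNReal.ofReal |2 * f (c t) * pd i f (c t)| := setLIntegral_le_lintegral _ _
    _ = 2 * ∫⁻ t, ENNReal.ofReal |f (c t) * pd i f (c t)| := by
        have hm : Measurable fun t => ENNReal.ofReal |f (c t) * pd i f (c t)| :=
          ENNReal.measurable_ofReal.comp
            (((hf.continuous.comp hcont_c).mul ((pd_continuous hf i).comp hcont_c)).abs.measurable)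
        rw [← lintegral_const_mul 2 hm]
        congr 1; funext t
        rw [habs t, ENNReal.ofReal_mul (by norm_num)]
        norm_num

lemma point_bound (f : E3 → ℝ) (hf : ContDiff ℝ (⊤ : ℕ∞) f) (hs : HasCompactSupport f) (i : Fin 3)
    (c : ℝ → E3) (hc : ∀ t, c t = c 0 + t • EuclideanSpace.single i 1) (a : ℝ) :
    ENNReal.ofReal |f (c a)| ≤
      (2 * ∫⁻ t, ENNReal.ofReal |f (c t) * pd i f (c t)|) ^ ((1:ℝ)/2) := by
  rw [ofReal_abs]
  exact ENNReal.rpow_le_rpow (line_bound f hf hs i c hc a) (by norm_num)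

lemma L2sq_nonneg (φ : E3 → ℝ) : 0 ≤ L2sq φ :=
  MeasureTheory.integral_nonneg fun x => by positivity

lemma ofReal_L2sq {φ : E3 → ℝ} (hc : Continuous φ) (hs : HasCompactSupport φ) :
    ENNReal.ofReal (L2sq φ) = ∫⁻ p : ℝ × ℝ × ℝ, ENNReal.ofReal ((φ (V3 p)) ^ 2) := by
  have hi : Integrable (fun x : E3 => φ x ^ 2) := by
    have h1 : HasCompactSupport (fun x : E3 => φ x * φ x) := hs.mul_right
    have h2 : Integrable (fun x : E3 => φ x * φ x) volume :=
      (hc.mul hc).integrable_of_hasCompactSupport h1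
    simpa [sq] using h2
  have h1 : L2sq φ = ∫ x : E3, φ x ^ 2 := by
    unfold L2sq
    congr 1; funext x
    rw [Real.norm_eq_abs, sq_abs]
  rw [h1, MeasureTheory.ofReal_integral_eq_lintegral_ofReal hi
    (Filter.Eventually.of_forall fun x => sq_nonneg _)]
  exact (lint_comp (ENNReal.measurable_ofReal.comp ((hc.pow 2).measurable))).symm

lemma rpm {α : Type*} [MeasurableSpace α] {u : α → ℝ≥0∞} (hu : Measurable u) :
    Measurable fun x => u x ^ ((1:ℝ)/2) :=
  ENNReal.continuous_rpow_const.measurable.comp hu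

end AnisoAux

open scoped ENNReal
namespace AnisoAux

lemma two_rpow_half_le : (2:ℝ≥0∞) ^ ((1:ℝ)/2) ≤ 2 := by
  calc (2:ℝ≥0∞) ^ ((1:ℝ)/2) ≤ (2:ℝ≥0∞) ^ (1:ℝ) :=
        ENNReal.rpow_le_rpow_of_exponent_le (by norm_num) (by norm_num)
    _ = 2 := ENNReal.rpow_one 2

lemma fac_bound {a b X : ℝ≥0∞} (hX : X ≤ 2 * (a ^ ((1:ℝ)/2) * b ^ ((1:ℝ)/2))) :
    X ^ ((1:ℝ)/2) ≤ 2 * (a ^ ((1:ℝ)/4) * b ^ ((1:ℝ)/4)) := by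
  calc X ^ ((1:ℝ)/2) ≤ (2 * (a ^ ((1:ℝ)/2) * b ^ ((1:ℝ)/2))) ^ ((1:ℝ)/2) :=
        ENNReal.rpow_le_rpow hX (by norm_num)
    _ = 2 ^ ((1:ℝ)/2) * (a ^ ((1:ℝ)/4) * b ^ ((1:ℝ)/4)) := by
        rw [ENNReal.mul_rpow_of_nonneg _ _ (by norm_num : (0:ℝ) ≤ 1/2),
          ENNReal.mul_rpow_of_nonneg _ _ (by norm_num : (0:ℝ) ≤ 1/2),
          ← ENNReal.rpow_mul, ← ENNReal.rpow_mul]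
        norm_num
    _ ≤ 2 * (a ^ ((1:ℝ)/4) * b ^ ((1:ℝ)/4)) := mul_le_mul_left two_rpow_half_le _

end AnisoAux


open AnisoAux in
/-- Anisotropic Sobolev inequality (Lemma 2.1, first inequality):
`∫ |fgh| ≤ C ‖f‖^{1/2}‖∂₁f‖^{1/2} ‖g‖^{1/2}‖∂₂g‖^{1/2} ‖h‖^{1/2}‖∂₃h‖^{1/2}`. -/
theorem anisotropic_inequality_one :
    ∃ C : ℝ, 0 < C ∧ ∀ f g h : E3 → ℝ,
      ContDiff ℝ (⊤ : ℕ∞) f → HasCompactSupport f →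
      ContDiff ℝ (⊤ : ℕ∞) g → HasCompactSupport g →
      ContDiff ℝ (⊤ : ℕ∞) h → HasCompactSupport h →
      (∫ x : E3, |f x * g x * h x|) ≤
        C * (L2norm f) ^ ((1:ℝ)/2) * (L2norm (pd 0 f)) ^ ((1:ℝ)/2)
          * (L2norm g) ^ ((1:ℝ)/2) * (L2norm (pd 1 g)) ^ ((1:ℝ)/2)
          * (L2norm h) ^ ((1:ℝ)/2) * (L2norm (pd 2 h)) ^ ((1:ℝ)/2) := by

  refine ⟨8, by norm_num, ?_⟩
  intro f g h hf hsf hg hsg hh hsh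
  have hcf := hf.continuous
  have hcg := hg.continuous
  have hch := hh.continuous
  set kf : ℝ × ℝ × ℝ → ℝ≥0∞ := fun p => ENNReal.ofReal |f (V3 p) * pd 0 f (V3 p)| with hkf
  set kg : ℝ × ℝ × ℝ → ℝ≥0∞ := fun p => ENNReal.ofReal |g (V3 p) * pd 1 g (V3 p)| with hkg
  set kh : ℝ × ℝ × ℝ → ℝ≥0∞ := fun p => ENNReal.ofReal |h (V3 p) * pd 2 h (V3 p)| with hkh
  have mkf : Measurable kf := ENNReal.measurable_ofReal.comp
    (((hcf.comp continuous_V3).mul ((pd_continuous hf 0).comp continuous_V3)).abs.measurable)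
  have mkg : Measurable kg := ENNReal.measurable_ofReal.comp
    (((hcg.comp continuous_V3).mul ((pd_continuous hg 1).comp continuous_V3)).abs.measurable)
  have mkh : Measurable kh := ENNReal.measurable_ofReal.comp
    (((hch.comp continuous_V3).mul ((pd_continuous hh 2).comp continuous_V3)).abs.measurable)
  set F : ℝ × ℝ → ℝ≥0∞ := fun q => 2 * ∫⁻ t, kf (t, q) with hF
  set G : ℝ × ℝ → ℝ≥0∞ := fun q => 2 * ∫⁻ t, kg (q.1, t, q.2) with hG
  set H : ℝ × ℝ → ℝ≥0∞ := fun q => 2 * ∫⁻ t, kh (q.1, q.2, t) with hH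
  have mF : Measurable F := measurable_const.mul (Measurable.lintegral_prod_left' mkf)
  have mG : Measurable G := by
    have m1 : Measurable fun r : (ℝ × ℝ) × ℝ => kg (r.1.1, r.2, r.1.2) :=
      mkg.comp (by fun_prop)
    exact measurable_const.mul (Measurable.lintegral_prod_right' m1)
  have mH : Measurable H := by
    have m1 : Measurable fun r : (ℝ × ℝ) × ℝ => kh (r.1.1, r.1.2, r.2) :=
      mkh.comp (by fun_prop)
    exact measurable_const.mul (Measurable.lintegral_prod_right' m1)
  set IF : ℝ≥0∞ := ∫⁻ q : ℝ × ℝ, F q with hIF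
  set IG : ℝ≥0∞ := ∫⁻ q : ℝ × ℝ, G q with hIG
  set IH : ℝ≥0∞ := ∫⁻ q : ℝ × ℝ, H q with hIH
  -- pointwise bound
  have hpt : ∀ p : ℝ × ℝ × ℝ,
      ENNReal.ofReal |f (V3 p) * g (V3 p) * h (V3 p)| ≤
        F p.2 ^ ((1:ℝ)/2) * G (p.1, p.2.2) ^ ((1:ℝ)/2) * H (p.1, p.2.1) ^ ((1:ℝ)/2) := by
    intro p
    have bf : ENNReal.ofReal |f (V3 p)| ≤ F p.2 ^ ((1:ℝ)/2) := by
      have hc : ∀ t, (fun t => V3 (t, p.2)) t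
          = (fun t => V3 (t, p.2)) 0 + t • EuclideanSpace.single (0 : Fin 3) 1 := by
        intro t
        show vec3 t p.2.1 p.2.2 = vec3 0 p.2.1 p.2.2 + t • EuclideanSpace.single (0 : Fin 3) 1
        rw [vec3_add_single0, zero_add]
      exact point_bound f hf hsf 0 (fun t => V3 (t, p.2)) hc p.1
    have bg : ENNReal.ofReal |g (V3 p)| ≤ G (p.1, p.2.2) ^ ((1:ℝ)/2) := by
      have hc : ∀ t, (fun t => V3 (p.1, t, p.2.2)) t
          = (fun t => V3 (p.1, t, p.2.2)) 0 + t • EuclideanSpace.single (1 : Fin 3) 1 := by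
        intro t
        show vec3 p.1 t p.2.2 = vec3 p.1 0 p.2.2 + t • EuclideanSpace.single (1 : Fin 3) 1
        rw [vec3_add_single1, zero_add]
      exact point_bound g hg hsg 1 (fun t => V3 (p.1, t, p.2.2)) hc p.2.1
    have bh : ENNReal.ofReal |h (V3 p)| ≤ H (p.1, p.2.1) ^ ((1:ℝ)/2) := by
      have hc : ∀ t, (fun t => V3 (p.1, p.2.1, t)) t
          = (fun t => V3 (p.1, p.2.1, t)) 0 + t • EuclideanSpace.single (2 : Fin 3) 1 := by
        intro t
        show vec3 p.1 p.2.1 t = vec3 p.1 p.2.1 0 + t • EuclideanSpace.single (2 : Fin 3) 1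
        rw [vec3_add_single2, zero_add]
      exact point_bound h hh hsh 2 (fun t => V3 (p.1, p.2.1, t)) hc p.2.2
    calc ENNReal.ofReal |f (V3 p) * g (V3 p) * h (V3 p)|
        = ENNReal.ofReal |f (V3 p)| * ENNReal.ofReal |g (V3 p)| * ENNReal.ofReal |h (V3 p)| := by
          rw [abs_mul, abs_mul, ENNReal.ofReal_mul (by positivity), ENNReal.ofReal_mul (abs_nonneg _)]
      _ ≤ F p.2 ^ ((1:ℝ)/2) * G (p.1, p.2.2) ^ ((1:ℝ)/2) * H (p.1, p.2.1) ^ ((1:ℝ)/2) :=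
          mul_le_mul' (mul_le_mul' bf bg) bh
    -- the triple Cauchy–Schwarz (Loomis–Whitney) step
  have key : (∫⁻ p : ℝ × ℝ × ℝ, ENNReal.ofReal |f (V3 p) * g (V3 p) * h (V3 p)|) ≤
      IF ^ ((1:ℝ)/2) * IG ^ ((1:ℝ)/2) * IH ^ ((1:ℝ)/2) := by
    have mB : Measurable fun x : ℝ => ∫⁻ z, G (x, z) :=
      Measurable.lintegral_prod_right' mG
    have mC : Measurable fun x : ℝ => ∫⁻ y, H (x, y) :=
      Measurable.lintegral_prod_right' mH
    have mΦ : Measurable fun p : ℝ × ℝ × ℝ =>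
        F p.2 ^ ((1:ℝ)/2) * G (p.1, p.2.2) ^ ((1:ℝ)/2) * H (p.1, p.2.1) ^ ((1:ℝ)/2) :=
      ((rpm (mF.comp measurable_snd)).mul (rpm (mG.comp (by fun_prop)))).mul
        (rpm (mH.comp (by fun_prop)))
    have inner : ∀ x : ℝ, (∫⁻ y, ∫⁻ z, F (y, z) ^ ((1:ℝ)/2) * G (x, z) ^ ((1:ℝ)/2) * H (x, y) ^ ((1:ℝ)/2)) ≤
        IF ^ ((1:ℝ)/2) * ((∫⁻ z, G (x, z)) ^ ((1:ℝ)/2) * (∫⁻ y, H (x, y)) ^ ((1:ℝ)/2)) := by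
      intro x
      have mFy : ∀ y : ℝ, Measurable fun z => F (y, z) := fun y => mF.comp measurable_prodMk_left
      have mGx : Measurable fun z : ℝ => G (x, z) := mG.comp measurable_prodMk_left
      have mHx : Measurable fun y : ℝ => H (x, y) := mH.comp measurable_prodMk_left
      have mA : Measurable fun y : ℝ => ∫⁻ z, F (y, z) := Measurable.lintegral_prod_right' mF
      calc (∫⁻ y, ∫⁻ z, F (y, z) ^ ((1:ℝ)/2) * G (x, z) ^ ((1:ℝ)/2) * H (x, y) ^ ((1:ℝ)/2))
          ≤ ∫⁻ y, H (x, y) ^ ((1:ℝ)/2) * ((∫⁻ z, F (y, z)) ^ ((1:ℝ)/2) * (∫⁻ z, G (x, z)) ^ ((1:ℝ)/2)) := by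
            refine lintegral_mono fun y => ?_
            calc (∫⁻ z, F (y, z) ^ ((1:ℝ)/2) * G (x, z) ^ ((1:ℝ)/2) * H (x, y) ^ ((1:ℝ)/2))
                = H (x, y) ^ ((1:ℝ)/2) * ∫⁻ z, F (y, z) ^ ((1:ℝ)/2) * G (x, z) ^ ((1:ℝ)/2) := by
                  rw [← lintegral_const_mul (f := fun z => F (y, z) ^ ((1:ℝ)/2) * G (x, z) ^ ((1:ℝ)/2)) _ ((rpm (mFy y)).mul (rpm mGx))]
                  refine lintegral_congr fun z => ?_; ring
              _ ≤ H (x, y) ^ ((1:ℝ)/2) * ((∫⁻ z, F (y, z)) ^ ((1:ℝ)/2) * (∫⁻ z, G (x, z)) ^ ((1:ℝ)/2)) :=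
                  mul_le_mul_right (CS volume (mFy y).aemeasurable mGx.aemeasurable) _
        _ = (∫⁻ z, G (x, z)) ^ ((1:ℝ)/2) * ∫⁻ y, H (x, y) ^ ((1:ℝ)/2) * (∫⁻ z, F (y, z)) ^ ((1:ℝ)/2) := by
            rw [← lintegral_const_mul (f := fun y => H (x, y) ^ ((1:ℝ)/2) * (∫⁻ z, F (y, z)) ^ ((1:ℝ)/2)) _ ((rpm mHx).mul (rpm mA))]
            refine lintegral_congr fun y => ?_; ring
        _ ≤ (∫⁻ z, G (x, z)) ^ ((1:ℝ)/2) * ((∫⁻ y, H (x, y)) ^ ((1:ℝ)/2) * (∫⁻ y, ∫⁻ z, F (y, z)) ^ ((1:ℝ)/2)) :=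
            mul_le_mul_right (CS volume mHx.aemeasurable mA.aemeasurable) _
        _ = IF ^ ((1:ℝ)/2) * ((∫⁻ z, G (x, z)) ^ ((1:ℝ)/2) * (∫⁻ y, H (x, y)) ^ ((1:ℝ)/2)) := by
            have hF2 : (∫⁻ y, ∫⁻ z, F (y, z)) = IF := (MeasureTheory.lintegral_prod _ mF.aemeasurable).symm
            rw [hF2]; ring
    calc (∫⁻ p : ℝ × ℝ × ℝ, ENNReal.ofReal |f (V3 p) * g (V3 p) * h (V3 p)|)
        ≤ ∫⁻ p : ℝ × ℝ × ℝ, F p.2 ^ ((1:ℝ)/2) * G (p.1, p.2.2) ^ ((1:ℝ)/2) * H (p.1, p.2.1) ^ ((1:ℝ)/2) :=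
          lintegral_mono hpt
      _ = ∫⁻ x : ℝ, ∫⁻ q : ℝ × ℝ, F q ^ ((1:ℝ)/2) * G (x, q.2) ^ ((1:ℝ)/2) * H (x, q.1) ^ ((1:ℝ)/2) :=
          MeasureTheory.lintegral_prod _ mΦ.aemeasurable
      _ = ∫⁻ x : ℝ, ∫⁻ y : ℝ, ∫⁻ z : ℝ, F (y, z) ^ ((1:ℝ)/2) * G (x, z) ^ ((1:ℝ)/2) * H (x, y) ^ ((1:ℝ)/2) := by
          refine lintegral_congr fun x => ?_
          exact MeasureTheory.lintegral_prod _
            (Measurable.aemeasurable (((rpm mF).mul (rpm (mG.comp (by fun_prop :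
              Measurable fun q : ℝ × ℝ => (x, q.2))))).mul (rpm (mH.comp (by fun_prop :
              Measurable fun q : ℝ × ℝ => (x, q.1))))))
      _ ≤ ∫⁻ x : ℝ, IF ^ ((1:ℝ)/2) * ((∫⁻ z, G (x, z)) ^ ((1:ℝ)/2) * (∫⁻ y, H (x, y)) ^ ((1:ℝ)/2)) :=
          lintegral_mono inner
      _ = IF ^ ((1:ℝ)/2) * ∫⁻ x, (∫⁻ z, G (x, z)) ^ ((1:ℝ)/2) * (∫⁻ y, H (x, y)) ^ ((1:ℝ)/2) :=
          lintegral_const_mul _ ((rpm mB).mul (rpm mC))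
      _ ≤ IF ^ ((1:ℝ)/2) * ((∫⁻ x, ∫⁻ z, G (x, z)) ^ ((1:ℝ)/2) * (∫⁻ x, ∫⁻ y, H (x, y)) ^ ((1:ℝ)/2)) :=
          mul_le_mul_right (CS volume mB.aemeasurable mC.aemeasurable) _
      _ = IF ^ ((1:ℝ)/2) * (IG ^ ((1:ℝ)/2) * IH ^ ((1:ℝ)/2)) := by
          have e1 : (∫⁻ x : ℝ, ∫⁻ z : ℝ, G (x, z)) = IG :=
            (MeasureTheory.lintegral_prod _ mG.aemeasurable).symm
          have e2 : (∫⁻ x : ℝ, ∫⁻ y : ℝ, H (x, y)) = IH :=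
            (MeasureTheory.lintegral_prod _ mH.aemeasurable).symm
          rw [e1, e2]
      _ = IF ^ ((1:ℝ)/2) * IG ^ ((1:ℝ)/2) * IH ^ ((1:ℝ)/2) := (mul_assoc _ _ _).symm
    -- identify IF, IG, IH with integrals over ℝ³
  have hIFeq : IF = 2 * ∫⁻ p : ℝ × ℝ × ℝ, kf p := by
    calc IF = ∫⁻ q : ℝ × ℝ, 2 * ∫⁻ t, kf (t, q) := rfl
      _ = 2 * ∫⁻ q : ℝ × ℝ, ∫⁻ t, kf (t, q) :=
          lintegral_const_mul 2 (Measurable.lintegral_prod_left' mkf)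
      _ = 2 * ∫⁻ t, ∫⁻ q : ℝ × ℝ, kf (t, q) := by
          congr 1
          exact MeasureTheory.lintegral_lintegral_swap
            (show AEMeasurable (Function.uncurry fun (q : ℝ × ℝ) (t : ℝ) => kf (t, q))
              (volume.prod volume) from (mkf.comp measurable_swap).aemeasurable)
      _ = 2 * ∫⁻ p : ℝ × ℝ × ℝ, kf p := by
          congr 1
          exact (MeasureTheory.lintegral_prod _ mkf.aemeasurable).symm
  have hIGeq : IG = 2 * ∫⁻ p : ℝ × ℝ × ℝ, kg p := by
    have m1 : Measurable fun r : (ℝ × ℝ) × ℝ => kg (r.1.1, r.2, r.1.2) := mkg.comp (by fun_prop)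
    calc IG = ∫⁻ q : ℝ × ℝ, 2 * ∫⁻ t, kg (q.1, t, q.2) := rfl
      _ = 2 * ∫⁻ q : ℝ × ℝ, ∫⁻ t, kg (q.1, t, q.2) :=
          lintegral_const_mul 2 (Measurable.lintegral_prod_right' m1)
      _ = 2 * ∫⁻ x : ℝ, ∫⁻ z : ℝ, ∫⁻ t : ℝ, kg (x, t, z) := by
          congr 1
          exact MeasureTheory.lintegral_prod _ (Measurable.aemeasurable
            (Measurable.lintegral_prod_right' m1))
      _ = 2 * ∫⁻ x : ℝ, ∫⁻ t : ℝ, ∫⁻ z : ℝ, kg (x, t, z) := by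
          congr 1
          refine lintegral_congr fun x => ?_
          exact MeasureTheory.lintegral_lintegral_swap
            ((mkg.comp (by fun_prop : Measurable fun r : ℝ × ℝ => (x, r.2, r.1))).aemeasurable)
      _ = 2 * ∫⁻ x : ℝ, ∫⁻ r : ℝ × ℝ, kg (x, r) := by
          congr 1
          refine lintegral_congr fun x => ?_
          exact (MeasureTheory.lintegral_prod _
            ((mkg.comp (measurable_prodMk_left : Measurable fun r : ℝ × ℝ => (x, r))).aemeasurable)).symm
      _ = 2 * ∫⁻ p : ℝ × ℝ × ℝ, kg p := by
          congr 1
          exact (MeasureTheory.lintegral_prod _ mkg.aemeasurable).symm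
  have hIHeq : IH = 2 * ∫⁻ p : ℝ × ℝ × ℝ, kh p := by
    have m1 : Measurable fun r : (ℝ × ℝ) × ℝ => kh (r.1.1, r.1.2, r.2) := mkh.comp (by fun_prop)
    calc IH = ∫⁻ q : ℝ × ℝ, 2 * ∫⁻ t, kh (q.1, q.2, t) := rfl
      _ = 2 * ∫⁻ q : ℝ × ℝ, ∫⁻ t, kh (q.1, q.2, t) :=
          lintegral_const_mul 2 (Measurable.lintegral_prod_right' m1)
      _ = 2 * ∫⁻ x : ℝ, ∫⁻ y : ℝ, ∫⁻ t : ℝ, kh (x, y, t) := by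
          congr 1
          exact MeasureTheory.lintegral_prod _ (Measurable.aemeasurable
            (Measurable.lintegral_prod_right' m1))
      _ = 2 * ∫⁻ x : ℝ, ∫⁻ r : ℝ × ℝ, kh (x, r) := by
          congr 1
          refine lintegral_congr fun x => ?_
          exact (MeasureTheory.lintegral_prod _
            ((mkh.comp (measurable_prodMk_left : Measurable fun r : ℝ × ℝ => (x, r))).aemeasurable)).symm
      _ = 2 * ∫⁻ p : ℝ × ℝ × ℝ, kh p := by
          congr 1
          exact (MeasureTheory.lintegral_prod _ mkh.aemeasurable).symm
  -- Cauchy–Schwarz bounds for the three integrals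
  have sqbound : ∀ (φ : E3 → ℝ), ContDiff ℝ (⊤ : ℕ∞) φ → HasCompactSupport φ → ∀ i : Fin 3,
      (∫⁻ p : ℝ × ℝ × ℝ, ENNReal.ofReal |φ (V3 p) * pd i φ (V3 p)|) ≤
        (ENNReal.ofReal (L2sq φ)) ^ ((1:ℝ)/2) * (ENNReal.ofReal (L2sq (pd i φ))) ^ ((1:ℝ)/2) := by
    intro φ hφ hsφ i
    have hcφ := hφ.continuous
    have hpw : ∀ p : ℝ × ℝ × ℝ, ENNReal.ofReal |φ (V3 p) * pd i φ (V3 p)| =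
        (ENNReal.ofReal ((φ (V3 p)) ^ 2)) ^ ((1:ℝ)/2) *
          (ENNReal.ofReal ((pd i φ (V3 p)) ^ 2)) ^ ((1:ℝ)/2) := by
      intro p
      rw [abs_mul, ENNReal.ofReal_mul (abs_nonneg _), ofReal_abs (φ (V3 p)),
        ofReal_abs (pd i φ (V3 p))]
    have m1 : Measurable fun p : ℝ × ℝ × ℝ => ENNReal.ofReal ((φ (V3 p)) ^ 2) :=
      ENNReal.measurable_ofReal.comp (((hcφ.comp continuous_V3).pow 2).measurable)
    have m2 : Measurable fun p : ℝ × ℝ × ℝ => ENNReal.ofReal ((pd i φ (V3 p)) ^ 2) :=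
      ENNReal.measurable_ofReal.comp ((((pd_continuous hφ i).comp continuous_V3).pow 2).measurable)
    calc (∫⁻ p : ℝ × ℝ × ℝ, ENNReal.ofReal |φ (V3 p) * pd i φ (V3 p)|)
        = ∫⁻ p : ℝ × ℝ × ℝ, (ENNReal.ofReal ((φ (V3 p)) ^ 2)) ^ ((1:ℝ)/2) *
            (ENNReal.ofReal ((pd i φ (V3 p)) ^ 2)) ^ ((1:ℝ)/2) := lintegral_congr hpw
      _ ≤ (∫⁻ p : ℝ × ℝ × ℝ, ENNReal.ofReal ((φ (V3 p)) ^ 2)) ^ ((1:ℝ)/2) *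
            (∫⁻ p : ℝ × ℝ × ℝ, ENNReal.ofReal ((pd i φ (V3 p)) ^ 2)) ^ ((1:ℝ)/2) :=
          CS volume m1.aemeasurable m2.aemeasurable
      _ = (ENNReal.ofReal (L2sq φ)) ^ ((1:ℝ)/2) * (ENNReal.ofReal (L2sq (pd i φ))) ^ ((1:ℝ)/2) := by
          rw [ofReal_L2sq hcφ hsφ, ofReal_L2sq (pd_continuous hφ i) (pd_hcs hsφ i)]
  have hIFle : IF ≤ 2 * ((ENNReal.ofReal (L2sq f)) ^ ((1:ℝ)/2) * (ENNReal.ofReal (L2sq (pd 0 f))) ^ ((1:ℝ)/2)) := by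
    rw [hIFeq]; exact mul_le_mul_right (sqbound f hf hsf 0) 2
  have hIGle : IG ≤ 2 * ((ENNReal.ofReal (L2sq g)) ^ ((1:ℝ)/2) * (ENNReal.ofReal (L2sq (pd 1 g))) ^ ((1:ℝ)/2)) := by
    rw [hIGeq]; exact mul_le_mul_right (sqbound g hg hsg 1) 2
  have hIHle : IH ≤ 2 * ((ENNReal.ofReal (L2sq h)) ^ ((1:ℝ)/2) * (ENNReal.ofReal (L2sq (pd 2 h))) ^ ((1:ℝ)/2)) := by
    rw [hIHeq]; exact mul_le_mul_right (sqbound h hh hsh 2) 2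
  -- transfer the left-hand side
  have hintT : ENNReal.ofReal (∫ x : E3, |f x * g x * h x|) =
      ∫⁻ p : ℝ × ℝ × ℝ, ENNReal.ofReal |f (V3 p) * g (V3 p) * h (V3 p)| := by
    have hcs : HasCompactSupport (fun x : E3 => f x * g x * h x) := (hsf.mul_right).mul_right
    have hint : Integrable (fun x : E3 => |f x * g x * h x|) volume :=
      (((hcf.mul hcg).mul hch).abs).integrable_of_hasCompactSupport hcs.abs
    rw [MeasureTheory.ofReal_integral_eq_lintegral_ofReal hint
      (Filter.Eventually.of_forall fun x => abs_nonneg _)]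
    exact (lint_comp (ENNReal.measurable_ofReal.comp
      (((hcf.mul hcg).mul hch).abs.measurable))).symm
  -- combine in ℝ≥0∞
  set P : ℝ≥0∞ :=
    (ENNReal.ofReal (L2sq f)) ^ ((1:ℝ)/4) * (ENNReal.ofReal (L2sq (pd 0 f))) ^ ((1:ℝ)/4) *
    (ENNReal.ofReal (L2sq g)) ^ ((1:ℝ)/4) * (ENNReal.ofReal (L2sq (pd 1 g))) ^ ((1:ℝ)/4) *
    (ENNReal.ofReal (L2sq h)) ^ ((1:ℝ)/4) * (ENNReal.ofReal (L2sq (pd 2 h))) ^ ((1:ℝ)/4) with hP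
  have hmain : ENNReal.ofReal (∫ x : E3, |f x * g x * h x|) ≤ 8 * P := by
    rw [hintT]
    calc (∫⁻ p : ℝ × ℝ × ℝ, ENNReal.ofReal |f (V3 p) * g (V3 p) * h (V3 p)|)
        ≤ IF ^ ((1:ℝ)/2) * IG ^ ((1:ℝ)/2) * IH ^ ((1:ℝ)/2) := key
      _ ≤ (2 * ((ENNReal.ofReal (L2sq f)) ^ ((1:ℝ)/4) * (ENNReal.ofReal (L2sq (pd 0 f))) ^ ((1:ℝ)/4))) *
          (2 * ((ENNReal.ofReal (L2sq g)) ^ ((1:ℝ)/4) * (ENNReal.ofReal (L2sq (pd 1 g))) ^ ((1:ℝ)/4))) *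
          (2 * ((ENNReal.ofReal (L2sq h)) ^ ((1:ℝ)/4) * (ENNReal.ofReal (L2sq (pd 2 h))) ^ ((1:ℝ)/4))) :=
          mul_le_mul' (mul_le_mul' (fac_bound hIFle) (fac_bound hIGle)) (fac_bound hIHle)
      _ = 8 * P := by rw [hP]; ring
  -- back to the reals
  have hPfin : (8:ℝ≥0∞) * P ≠ ∞ := by
    rw [hP]
    refine ENNReal.mul_ne_top (by norm_num) ?_
    repeat' apply ENNReal.mul_ne_top
    all_goals exact ENNReal.rpow_ne_top_of_nonneg (by norm_num) ENNReal.ofReal_ne_top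
  have hle : (∫ x : E3, |f x * g x * h x|) ≤ ((8:ℝ≥0∞) * P).toReal := by
    have h0 : (0:ℝ) ≤ ∫ x : E3, |f x * g x * h x| :=
      MeasureTheory.integral_nonneg fun x => abs_nonneg _
    have := ENNReal.toReal_mono hPfin hmain
    rwa [ENNReal.toReal_ofReal h0] at this
  have tr : ∀ φ : E3 → ℝ, ((ENNReal.ofReal (L2sq φ)) ^ ((1:ℝ)/4)).toReal = (L2sq φ) ^ ((1:ℝ)/4) := by
    intro φ
    rw [← ENNReal.toReal_rpow, ENNReal.toReal_ofReal (L2sq_nonneg φ)]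
  have hPtr : ((8:ℝ≥0∞) * P).toReal =
      8 * ((L2sq f) ^ ((1:ℝ)/4) * (L2sq (pd 0 f)) ^ ((1:ℝ)/4) * (L2sq g) ^ ((1:ℝ)/4) *
        (L2sq (pd 1 g)) ^ ((1:ℝ)/4) * (L2sq h) ^ ((1:ℝ)/4) * (L2sq (pd 2 h)) ^ ((1:ℝ)/4)) := by
    rw [hP, ENNReal.toReal_mul, ENNReal.toReal_mul, ENNReal.toReal_mul, ENNReal.toReal_mul,
      ENNReal.toReal_mul, ENNReal.toReal_mul, tr, tr, tr, tr, tr, tr]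
    norm_num
  have hnorm : ∀ φ : E3 → ℝ, L2norm φ ^ ((1:ℝ)/2) = (L2sq φ) ^ ((1:ℝ)/4) := by
    intro φ
    rw [L2norm, Real.sqrt_eq_rpow, ← Real.rpow_mul (L2sq_nonneg φ)]
    norm_num
  calc (∫ x : E3, |f x * g x * h x|) ≤ ((8:ℝ≥0∞) * P).toReal := hle
    _ = 8 * ((L2sq f) ^ ((1:ℝ)/4) * (L2sq (pd 0 f)) ^ ((1:ℝ)/4) * (L2sq g) ^ ((1:ℝ)/4) *
        (L2sq (pd 1 g)) ^ ((1:ℝ)/4) * (L2sq h) ^ ((1:ℝ)/4) * (L2sq (pd 2 h)) ^ ((1:ℝ)/4)) := hPtr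
    _ = 8 * L2norm f ^ ((1:ℝ)/2) * L2norm (pd 0 f) ^ ((1:ℝ)/2) * L2norm g ^ ((1:ℝ)/2) *
        L2norm (pd 1 g) ^ ((1:ℝ)/2) * L2norm h ^ ((1:ℝ)/2) * L2norm (pd 2 h) ^ ((1:ℝ)/2) := by
        rw [hnorm f, hnorm (pd 0 f), hnorm g, hnorm (pd 1 g), hnorm h, hnorm (pd 2 h)]
        ring
end
end

section
/- Let P:(0,∞)→ℝ be continuously differentiable with P'>0, let ρ̄>0, and let c₀ ∈ (0,1] with c₀ ≤ ρ̄ ≤ c₀^{-1}. Define g(ρ) = ρ ∫_{ρ̄}^{ρ} (P(τ)−P(ρ̄))/τ² dτ. Then there exists a constant C ≥ 1 such that for all ρ ∈ [c₀, c₀^{-1}]: C^{-1}(ρ−ρ̄)² ≤ g(ρ) ≤ C(ρ−ρ̄)². -/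
open MeasureTheory Real Filter

noncomputable section

set_option maxHeartbeats 1000000 in
/-- Equivalence `g(ρ) ∼ (ρ-ρ̄)²` of the potential energy density on `[c₀, c₀⁻¹]`. -/
theorem potential_energy_equivalence (P P' : ℝ → ℝ) (ρbar c₀ : ℝ)
    (hc₀ : 0 < c₀) (hc₀' : c₀ ≤ 1)
    (hρbar : 0 < ρbar) (hρl : c₀ ≤ ρbar) (hρu : ρbar ≤ c₀⁻¹)
    (hP : ∀ r ∈ Set.Ioi (0:ℝ), HasDerivAt P (P' r) r)
    (hP'c : ContinuousOn P' (Set.Ioi 0))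
    (hP'pos : ∀ r ∈ Set.Ioi (0:ℝ), 0 < P' r) :
    ∃ C : ℝ, 1 ≤ C ∧ ∀ ρ ∈ Set.Icc c₀ c₀⁻¹,
      C⁻¹ * (ρ - ρbar) ^ 2 ≤ ρ * ∫ τ in ρbar..ρ, (P τ - P ρbar) / τ ^ 2 ∧
      ρ * (∫ τ in ρbar..ρ, (P τ - P ρbar) / τ ^ 2) ≤ C * (ρ - ρbar) ^ 2 := by
  -- Setup: the compact interval K = [c₀, c₀⁻¹]
  have hc₀inv1 : (1:ℝ) ≤ c₀⁻¹ := (one_le_inv_iff₀).mpr ⟨hc₀, hc₀'⟩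
  have hKle : c₀ ≤ c₀⁻¹ := le_trans hc₀' hc₀inv1
  set K : Set ℝ := Set.Icc c₀ c₀⁻¹ with hKdef
  have hKsub : K ⊆ Set.Ioi 0 := fun x hx => lt_of_lt_of_le hc₀ hx.1
  have hKne : K.Nonempty := ⟨ρbar, hρl, hρu⟩
  have hKcomp : IsCompact K := isCompact_Icc
  -- min and max of P' on K
  obtain ⟨τ₀, hτ₀K, hmin⟩ := hKcomp.exists_isMinOn hKne (hP'c.mono hKsub)
  obtain ⟨τ₁, hτ₁K, hmax⟩ := hKcomp.exists_isMaxOn hKne (hP'c.mono hKsub)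
  set m := P' τ₀ with hmdef
  set M := P' τ₁ with hMdef
  have hm : 0 < m := hP'pos τ₀ (hKsub hτ₀K)
  have hM : 0 < M := hP'pos τ₁ (hKsub hτ₁K)
  have hPcont : ContinuousOn P K := fun x hx =>
    ((hP x (hKsub hx)).continuousAt).continuousWithinAt
  -- mean value estimates
  have hkey : ∀ σ ∈ K, ∀ τ ∈ K, σ ≤ τ →
      m * (τ - σ) ≤ P τ - P σ ∧ P τ - P σ ≤ M * (τ - σ) := by
    intro σ hσ τ hτ hle
    rcases eq_or_lt_of_le hle with h | h
    · subst h; simp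
    · have hIccK : Set.Icc σ τ ⊆ K := Set.Icc_subset_Icc hσ.1 hτ.2
      obtain ⟨c, hc, hc'⟩ := exists_hasDerivAt_eq_slope P P' h
        (hPcont.mono hIccK)
        (fun x hx => hP x (hKsub (hIccK (Set.Ioo_subset_Icc_self hx))))
      have hcK : c ∈ K := hIccK (Set.Ioo_subset_Icc_self hc)
      have h1 : m ≤ P' c := hmin hcK
      have h2 : P' c ≤ M := hmax hcK
      have hpos : 0 < τ - σ := sub_pos.mpr h
      constructor
      · have := (le_div_iff₀ hpos).mp (hc' ▸ h1)
        linarith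
      · have := (div_le_iff₀ hpos).mp (hc' ▸ h2)
        linarith
  set a : ℝ := m * c₀ ^ 2 with hadef
  set b : ℝ := M / c₀ ^ 2 with hbdef
  have ha : 0 < a := by positivity
  have hb : 0 < b := by positivity
  -- pointwise bounds on the integrand
  set f : ℝ → ℝ := fun τ => (P τ - P ρbar) / τ ^ 2 with hfdef
  have hρbarK : ρbar ∈ K := ⟨hρl, hρu⟩
  have hpt1 : ∀ τ ∈ K, ρbar ≤ τ → a * (τ - ρbar) ≤ f τ ∧ f τ ≤ b * (τ - ρbar) := by
    intro τ hτ hle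
    obtain ⟨h1, h2⟩ := hkey ρbar hρbarK τ hτ hle
    have hτpos : 0 < τ := hKsub hτ
    have hτsq : 0 < τ ^ 2 := by positivity
    have hcτ : c₀ * τ ≤ 1 := by
      have := hτ.2
      calc c₀ * τ ≤ c₀ * c₀⁻¹ := by nlinarith
        _ = 1 := mul_inv_cancel₀ hc₀.ne'
    have hc₀τ : c₀ ≤ τ := hτ.1
    constructor
    · rw [hfdef]; rw [le_div_iff₀ hτsq]
      have h3 : 0 ≤ τ - ρbar := sub_nonneg.mpr hle
      have h4 : c₀ ^ 2 * τ ^ 2 ≤ 1 := by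
        nlinarith [mul_nonneg (mul_nonneg hc₀.le hτpos.le) (sub_nonneg.mpr hcτ)]
      have h5 : m * c₀ ^ 2 * (τ - ρbar) * τ ^ 2 ≤ m * (τ - ρbar) := by
        nlinarith [mul_nonneg (mul_nonneg hm.le h3) (sub_nonneg.mpr h4)]
      calc a * (τ - ρbar) * τ ^ 2 ≤ m * (τ - ρbar) := h5
        _ ≤ P τ - P ρbar := h1
    · rw [hfdef]; rw [div_le_iff₀ hτsq]
      have h3 : 0 ≤ τ - ρbar := sub_nonneg.mpr hle
      have h4 : c₀ ^ 2 ≤ τ ^ 2 := by nlinarith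
      have h5 : M * (τ - ρbar) ≤ M / c₀ ^ 2 * (τ - ρbar) * τ ^ 2 := by
        rw [div_mul_eq_mul_div, div_mul_eq_mul_div, le_div_iff₀ (by positivity : (0:ℝ) < c₀ ^ 2)]
        nlinarith [mul_nonneg (mul_nonneg hM.le h3) (sub_nonneg.mpr h4)]
      calc P τ - P ρbar ≤ M * (τ - ρbar) := h2
        _ ≤ b * (τ - ρbar) * τ ^ 2 := h5
  have hpt2 : ∀ τ ∈ K, τ ≤ ρbar → b * (τ - ρbar) ≤ f τ ∧ f τ ≤ a * (τ - ρbar) := by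
    intro τ hτ hle
    obtain ⟨h1, h2⟩ := hkey τ hτ ρbar hρbarK hle
    have hτpos : 0 < τ := hKsub hτ
    have hτsq : 0 < τ ^ 2 := by positivity
    have hcτ : c₀ * τ ≤ 1 := by
      have := hτ.2
      calc c₀ * τ ≤ c₀ * c₀⁻¹ := by nlinarith
        _ = 1 := mul_inv_cancel₀ hc₀.ne'
    have hc₀τ : c₀ ≤ τ := hτ.1
    have h3 : τ - ρbar ≤ 0 := sub_nonpos.mpr hle
    -- from hkey: m*(ρbar - τ) ≤ P ρbar - P τ ≤ M*(ρbar - τ)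
    constructor
    · rw [hfdef]; rw [le_div_iff₀ hτsq]
      have h4 : c₀ ^ 2 ≤ τ ^ 2 := by nlinarith
      have h5 : M / c₀ ^ 2 * (τ - ρbar) * τ ^ 2 ≤ M * (τ - ρbar) := by
        rw [div_mul_eq_mul_div, div_mul_eq_mul_div, div_le_iff₀ (by positivity : (0:ℝ) < c₀ ^ 2)]
        nlinarith [mul_nonneg (sub_nonneg.mpr h4) (mul_nonneg hM.le (neg_nonneg.mpr h3))]
      calc b * (τ - ρbar) * τ ^ 2 ≤ M * (τ - ρbar) := h5
        _ ≤ P τ - P ρbar := by linarith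
    · rw [hfdef]; rw [div_le_iff₀ hτsq]
      have h4 : c₀ ^ 2 * τ ^ 2 ≤ 1 := by
        nlinarith [mul_nonneg (mul_nonneg hc₀.le hτpos.le) (sub_nonneg.mpr hcτ)]
      have h5 : m * (τ - ρbar) ≤ m * c₀ ^ 2 * (τ - ρbar) * τ ^ 2 := by
        nlinarith [mul_nonneg (mul_nonneg hm.le (neg_nonneg.mpr h3)) (sub_nonneg.mpr h4)]
      calc P τ - P ρbar ≤ m * (τ - ρbar) := by linarith
        _ ≤ a * (τ - ρbar) * τ ^ 2 := h5
  -- integral of linear functions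
  have hlin : ∀ c s t : ℝ, (∫ τ in s..t, c * (τ - ρbar)) =
      c / 2 * ((t - ρbar) ^ 2 - (s - ρbar) ^ 2) := by
    intro c s t
    have hderiv : ∀ τ : ℝ, HasDerivAt (fun x => c / 2 * (x - ρbar) ^ 2) (c * (τ - ρbar)) τ := by
      intro τ
      have h := (((hasDerivAt_id τ).sub_const ρbar).pow 2).const_mul (c / 2)
      norm_num at h
      refine h.congr_deriv ?_
      ring
    rw [intervalIntegral.integral_eq_sub_of_hasDerivAt (fun τ _ => hderiv τ)
      ((continuous_const.mul (continuous_id.sub continuous_const)).intervalIntegrable s t)]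
    ring
  -- continuity of the integrand
  have hfcont : ContinuousOn f K := by
    apply ContinuousOn.div (hPcont.sub continuousOn_const) (continuous_pow 2).continuousOn
    intro x hx
    exact pow_ne_zero 2 (hKsub hx).ne'
  -- the main bound on the integral, for each ρ in K
  refine ⟨max 1 (max (2 / (c₀ * a)) (c₀⁻¹ * (b / 2))), le_max_left _ _, ?_⟩
  intro ρ hρ
  set C : ℝ := max 1 (max (2 / (c₀ * a)) (c₀⁻¹ * (b / 2))) with hCdef
  have hC1 : (1:ℝ) ≤ C := le_max_left _ _
  have hCpos : 0 < C := lt_of_lt_of_le one_pos hC1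
  have hρK : ρ ∈ K := hρ
  have hIccsub : Set.uIcc ρbar ρ ⊆ K := Set.uIcc_subset_Icc hρbarK hρK
  have hfint : IntervalIntegrable f volume ρbar ρ :=
    (hfcont.mono hIccsub).intervalIntegrable
  have hI : a / 2 * (ρ - ρbar) ^ 2 ≤ (∫ τ in ρbar..ρ, f τ) ∧
      (∫ τ in ρbar..ρ, f τ) ≤ b / 2 * (ρ - ρbar) ^ 2 := by
    rcases le_total ρbar ρ with hle | hle
    · have hIccK : Set.Icc ρbar ρ ⊆ K := Set.Icc_subset_Icc hρbarK.1 hρK.2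
      have h1 : (∫ τ in ρbar..ρ, a * (τ - ρbar)) ≤ ∫ τ in ρbar..ρ, f τ :=
        intervalIntegral.integral_mono_on hle
          ((continuous_const.mul (continuous_id.sub continuous_const)).intervalIntegrable _ _)
          hfint (fun τ hτ => (hpt1 τ (hIccK hτ) hτ.1).1)
      have h2 : (∫ τ in ρbar..ρ, f τ) ≤ ∫ τ in ρbar..ρ, b * (τ - ρbar) :=
        intervalIntegral.integral_mono_on hle hfint
          ((continuous_const.mul (continuous_id.sub continuous_const)).intervalIntegrable _ _)
          (fun τ hτ => (hpt1 τ (hIccK hτ) hτ.1).2)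
      rw [hlin] at h1 h2
      constructor <;> [nlinarith; nlinarith]
    · have hIccK : Set.Icc ρ ρbar ⊆ K := Set.Icc_subset_Icc hρK.1 hρbarK.2
      have h1 : (∫ τ in ρ..ρbar, b * (τ - ρbar)) ≤ ∫ τ in ρ..ρbar, f τ :=
        intervalIntegral.integral_mono_on hle
          ((continuous_const.mul (continuous_id.sub continuous_const)).intervalIntegrable _ _)
          hfint.symm (fun τ hτ => (hpt2 τ (hIccK hτ) hτ.2).1)
      have h2 : (∫ τ in ρ..ρbar, f τ) ≤ ∫ τ in ρ..ρbar, a * (τ - ρbar) :=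
        intervalIntegral.integral_mono_on hle hfint.symm
          ((continuous_const.mul (continuous_id.sub continuous_const)).intervalIntegrable _ _)
          (fun τ hτ => (hpt2 τ (hIccK hτ) hτ.2).2)
      rw [hlin] at h1 h2
      have hsymm : (∫ τ in ρbar..ρ, f τ) = -∫ τ in ρ..ρbar, f τ :=
        intervalIntegral.integral_symm ρ ρbar
      rw [hsymm]
      constructor <;> [nlinarith; nlinarith]
  have hInn : 0 ≤ ∫ τ in ρbar..ρ, f τ := le_trans (by positivity) hI.1
  have hρpos : 0 < ρ := hKsub hρK
  constructor
  · -- lower bound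
    have hA : 2 / (c₀ * a) ≤ C := le_trans (le_max_left _ _) (le_max_right _ _)
    have hApos : 0 < 2 / (c₀ * a) := by positivity
    have hCinv : C⁻¹ ≤ c₀ * a / 2 := by
      have := inv_anti₀ hApos hA
      calc C⁻¹ ≤ (2 / (c₀ * a))⁻¹ := this
        _ = c₀ * a / 2 := by field_simp
    calc C⁻¹ * (ρ - ρbar) ^ 2 ≤ c₀ * a / 2 * (ρ - ρbar) ^ 2 := by nlinarith [sq_nonneg (ρ - ρbar)]
      _ = c₀ * (a / 2 * (ρ - ρbar) ^ 2) := by ring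
      _ ≤ c₀ * ∫ τ in ρbar..ρ, f τ := by nlinarith [hI.1]
      _ ≤ ρ * ∫ τ in ρbar..ρ, f τ := mul_le_mul_of_nonneg_right hρK.1 hInn
  · -- upper bound
    have hB : c₀⁻¹ * (b / 2) ≤ C := le_trans (le_max_right _ _) (le_max_right _ _)
    calc ρ * (∫ τ in ρbar..ρ, f τ) ≤ c₀⁻¹ * ∫ τ in ρbar..ρ, f τ :=
          mul_le_mul_of_nonneg_right hρK.2 hInn
      _ ≤ c₀⁻¹ * (b / 2 * (ρ - ρbar) ^ 2) := by
          have := hI.2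
          have hc : 0 < c₀⁻¹ := by positivity
          nlinarith
      _ = c₀⁻¹ * (b / 2) * (ρ - ρbar) ^ 2 := by ring
      _ ≤ C * (ρ - ρbar) ^ 2 := by nlinarith [sq_nonneg (ρ - ρbar)]
end
end

section
/- There exists a constant C>0 such that for all smooth compactly supported u, B : ℝ³ → ℝ³ and every multi-index γ with |γ|=3: |∫_{ℝ³} ∂^γ(div u) (B·∂^γ B) dx| ≤ C ‖B‖_{H³} ‖∇_hB‖_{H³} ‖∇u‖_{H³}. -/
open MeasureTheory Real Filter

noncomputable section

section Chunk1
variable {F G : Type*} [NormedAddCommGroup F] [NormedSpace ℝ F]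
  [NormedAddCommGroup G] [NormedSpace ℝ G]

lemma pd_contDiff {f : E3 → F} (hf : ContDiff ℝ (⊤ : ℕ∞) f) (i : Fin 3) : ContDiff ℝ (⊤ : ℕ∞) (pd i f) := by
  have h1 : ContDiff ℝ (⊤ : ℕ∞) (fderiv ℝ f) := hf.fderiv_right (by simp)
  exact (ContinuousLinearMap.apply ℝ F (EuclideanSpace.single i (1:ℝ))).contDiff.comp h1

lemma pdL_contDiff {f : E3 → F} (hf : ContDiff ℝ (⊤ : ℕ∞) f) (γ : List (Fin 3)) :
    ContDiff ℝ (⊤ : ℕ∞) (pdL γ f) := by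
  induction γ with
  | nil => exact hf
  | cons i l ih => exact pd_contDiff ih i

lemma pd_hcs {f : E3 → F} (hf : HasCompactSupport f) (i : Fin 3) :
    HasCompactSupport (pd i f) := by
  have := hf.fderiv (𝕜 := ℝ)
  exact this.comp_left (g := fun L : E3 →L[ℝ] F => L (EuclideanSpace.single i (1:ℝ))) rfl

lemma pdL_hcs {f : E3 → F} (hf : HasCompactSupport f) (γ : List (Fin 3)) :
    HasCompactSupport (pdL γ f) := by
  induction γ with
  | nil => exact hf
  | cons i l ih => exact pd_hcs ih i

lemma pd_clm_comp {f : E3 → F} (hf : ContDiff ℝ (⊤ : ℕ∞) f) (A : F →L[ℝ] G) (i : Fin 3) :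
    pd i (fun x => A (f x)) = fun x => A (pd i f x) := by
  funext x
  have hd : HasFDerivAt f (fderiv ℝ f x) x := (hf.differentiable (by simp) x).hasFDerivAt
  have : HasFDerivAt (fun y => A (f y)) ((A : F →L[ℝ] G).comp (fderiv ℝ f x)) x :=
    A.hasFDerivAt.comp x hd
  simp [pd, this.fderiv]

lemma pdL_clm_comp {f : E3 → F} (hf : ContDiff ℝ (⊤ : ℕ∞) f) (A : F →L[ℝ] G) (γ : List (Fin 3)) :
    pdL γ (fun x => A (f x)) = fun x => A (pdL γ f x) := by
  induction γ with
  | nil => rfl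
  | cons i l ih => simp only [pdL, ih]; exact pd_clm_comp (pdL_contDiff hf l) A i

lemma pd_fun_add {f g : E3 → F} (hf : ContDiff ℝ (⊤ : ℕ∞) f) (hg : ContDiff ℝ (⊤ : ℕ∞) g) (i : Fin 3) :
    pd i (fun x => f x + g x) = fun x => pd i f x + pd i g x := by
  funext x
  simp [pd, fderiv_fun_add ((hf.differentiable (by simp) x)) ((hg.differentiable (by simp) x))]

lemma pdL_fun_add {f g : E3 → F} (hf : ContDiff ℝ (⊤ : ℕ∞) f) (hg : ContDiff ℝ (⊤ : ℕ∞) g) (γ : List (Fin 3)) :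
    pdL γ (fun x => f x + g x) = fun x => pdL γ f x + pdL γ g x := by
  induction γ with
  | nil => rfl
  | cons i l ih =>
    simp only [pdL, ih]
    exact pd_fun_add (pdL_contDiff hf l) (pdL_contDiff hg l) i

lemma pdL_eq_iteratedFDeriv {f : E3 → F} (hf : ContDiff ℝ (⊤ : ℕ∞) f) (γ : List (Fin 3)) (x : E3) :
    pdL γ f x = iteratedFDeriv ℝ γ.length f x
      (fun j => EuclideanSpace.single (γ.get j) (1:ℝ)) := by
  induction γ generalizing x with
  | nil => simp [pdL, iteratedFDeriv_zero_apply]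
  | cons i l ih =>
    have hsm : ContDiff ℝ (⊤ : ℕ∞) (iteratedFDeriv ℝ l.length f) := hf.iteratedFDeriv_right (by exact_mod_cast le_top)
    have hEq : pdL l f = fun y => (ContinuousMultilinearMap.apply ℝ
        (fun _ : Fin l.length => E3) F (fun j => EuclideanSpace.single (l.get j) (1:ℝ)))
        (iteratedFDeriv ℝ l.length f y) := by
      funext y; simpa using ih y
    have hd : HasFDerivAt (iteratedFDeriv ℝ l.length f)
        (fderiv ℝ (iteratedFDeriv ℝ l.length f) x) x :=
      (hsm.differentiable (by simp) x).hasFDerivAt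
    have : pdL (i :: l) f x = ((fderiv ℝ (iteratedFDeriv ℝ l.length f) x)
        (EuclideanSpace.single i (1:ℝ))) (fun j => EuclideanSpace.single (l.get j) (1:ℝ)) := by
      have h2 : HasFDerivAt (pdL l f)
          ((ContinuousMultilinearMap.apply ℝ (fun _ : Fin l.length => E3) F
            (fun j => EuclideanSpace.single (l.get j) (1:ℝ))).comp
            (fderiv ℝ (iteratedFDeriv ℝ l.length f) x)) x := by
        rw [hEq]
        exact (ContinuousMultilinearMap.apply ℝ (fun _ : Fin l.length => E3) F
          (fun j => EuclideanSpace.single (l.get j) (1:ℝ))).hasFDerivAt.comp x hd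
      simp only [pdL, pd, h2.fderiv]
      rfl
    rw [this]
    have hm : (fun j : Fin (i::l).length => EuclideanSpace.single ((i :: l).get j) (1:ℝ))
        = Fin.cons (EuclideanSpace.single i (1:ℝ))
          (fun j : Fin l.length => EuclideanSpace.single (l.get j) (1:ℝ)) := by
      funext j
      refine Fin.cases ?_ ?_ j <;> intros <;> rfl
    show _ = iteratedFDeriv ℝ (l.length + 1) f x
      (fun j : Fin (l.length + 1) => EuclideanSpace.single ((i :: l).get j) (1:ℝ))
    rw [show (fun j : Fin (l.length + 1) => EuclideanSpace.single ((i :: l).get j) (1:ℝ)) =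
      Fin.cons (EuclideanSpace.single i (1:ℝ))
          (fun j : Fin l.length => EuclideanSpace.single (l.get j) (1:ℝ)) from hm,
      iteratedFDeriv_succ_apply_left]
    simp

end Chunk1
section Chunk2
open ENNReal
variable {F G : Type*} [NormedAddCommGroup F] [NormedSpace ℝ F]
  [NormedAddCommGroup G] [NormedSpace ℝ G]

lemma norm_pdL_le {f : E3 → F} (hf : ContDiff ℝ (⊤ : ℕ∞) f) (γ : List (Fin 3)) (x : E3) :
    ‖pdL γ f x‖ ≤ ‖iteratedFDeriv ℝ γ.length f x‖ := by
  rw [pdL_eq_iteratedFDeriv hf]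
  refine le_trans (ContinuousMultilinearMap.le_opNorm _ _) ?_
  have h1 : ∀ j : Fin γ.length, ‖EuclideanSpace.single (γ.get j) (1:ℝ)‖ = 1 := by
    intro j; rw [EuclideanSpace.norm_single]; norm_num
  rw [Finset.prod_eq_one (fun j _ => h1 j), mul_one]

lemma pd_comm {f : E3 → F} (hf : ContDiff ℝ (⊤ : ℕ∞) f) (i j : Fin 3) :
    pd i (pd j f) = pd j (pd i f) := by
  funext x
  have hdf : ∀ y, HasFDerivAt f (fderiv ℝ f y) y :=
    fun y => (hf.differentiable (by simp) y).hasFDerivAt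
  have h1 : ContDiff ℝ (⊤ : ℕ∞) (fderiv ℝ f) := hf.fderiv_right (by simp)
  have hdf2 : HasFDerivAt (fderiv ℝ f) (fderiv ℝ (fderiv ℝ f) x) x :=
    (h1.differentiable (by simp) x).hasFDerivAt
  have key : ∀ a b : Fin 3, pd a (pd b f) x
      = (fderiv ℝ (fderiv ℝ f) x (EuclideanSpace.single a 1)) (EuclideanSpace.single b 1) := by
    intro a b
    have hc : HasFDerivAt (pd b f)
        ((ContinuousLinearMap.apply ℝ F (EuclideanSpace.single b (1:ℝ))).comp
          (fderiv ℝ (fderiv ℝ f) x)) x :=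
      (ContinuousLinearMap.apply ℝ F (EuclideanSpace.single b (1:ℝ))).hasFDerivAt.comp x hdf2
    simp only [pd, hc.fderiv]
    rfl
  rw [key i j, key j i]
  exact second_derivative_symmetric hdf hdf2 _ _

lemma pd_pdL_comm {f : E3 → F} (hf : ContDiff ℝ (⊤ : ℕ∞) f) (i : Fin 3) (γ : List (Fin 3)) :
    pd i (pdL γ f) = pdL γ (pd i f) := by
  induction γ with
  | nil => rfl
  | cons j l ih =>
    show pd i (pd j (pdL l f)) = pd j (pdL l (pd i f))
    rw [pd_comm (pdL_contDiff hf l) i j, ih]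

lemma hcs_norm_sq {f : E3 → F} (hs : HasCompactSupport f) :
    HasCompactSupport (fun x => ‖f x‖^2) :=
  hs.comp_left (g := fun v : F => ‖v‖^2) (by simp)

lemma integrable_norm_sq {f : E3 → F} (hc : Continuous f) (hs : HasCompactSupport f) :
    Integrable (fun x : E3 => ‖f x‖^2) :=
  ((hc.norm.pow 2)).integrable_of_hasCompactSupport (hcs_norm_sq hs)

/-- Cauchy–Schwarz for integrals of continuous compactly supported functions. -/
lemma integral_abs_mul_le {f g : E3 → ℝ} (hf : Continuous f) (hsf : HasCompactSupport f)
    (hg : Continuous g) (hsg : HasCompactSupport g) :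
    ∫ x : E3, |f x * g x| ≤ Real.sqrt (∫ x : E3, f x ^ 2) * Real.sqrt (∫ x : E3, g x ^ 2) := by
  have h2 : Real.HolderConjugate 2 2 := by constructor <;> norm_num
  have hmf : MemLp (fun x : E3 => |f x|) (ENNReal.ofReal 2) volume := by
    rw [show ENNReal.ofReal 2 = 2 by norm_num]
    exact hf.abs.memLp_of_hasCompactSupport (hsf.comp_left (g := abs) abs_zero)
  have hmg : MemLp (fun x : E3 => |g x|) (ENNReal.ofReal 2) volume := by
    rw [show ENNReal.ofReal 2 = 2 by norm_num]
    exact hg.abs.memLp_of_hasCompactSupport (hsg.comp_left (g := abs) abs_zero)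
  have := integral_mul_le_Lp_mul_Lq_of_nonneg h2
    (Filter.Eventually.of_forall (fun x => abs_nonneg (f x)))
    (Filter.Eventually.of_forall (fun x => abs_nonneg (g x))) hmf hmg
  calc ∫ x : E3, |f x * g x| = ∫ x : E3, |f x| * |g x| := by
        congr 1; funext x; exact abs_mul _ _
    _ ≤ (∫ x : E3, |f x| ^ (2:ℝ)) ^ ((1:ℝ)/2) * (∫ x : E3, |g x| ^ (2:ℝ)) ^ ((1:ℝ)/2) := this
    _ = Real.sqrt (∫ x : E3, f x ^ 2) * Real.sqrt (∫ x : E3, g x ^ 2) := by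
        rw [Real.sqrt_eq_rpow, Real.sqrt_eq_rpow]
        congr 2 <;> · congr 1; funext x
                      rw [show (2:ℝ) = ((2:ℕ):ℝ) by norm_num, Real.rpow_natCast]
                      rw [sq_abs]

end Chunk2
section Chunk3

/-- Replace the `i`-th coordinate of `x` by `t`. -/
def upd (i : Fin 3) (x : E3) (t : ℝ) : E3 := x + (t - x i) • EuclideanSpace.single i 1

lemma upd_apply (i : Fin 3) (x : E3) (t : ℝ) (j : Fin 3) :
    upd i x t j = if j = i then t else x j := by
  simp only [upd, PiLp.add_apply, PiLp.smul_apply, EuclideanSpace.single_apply, smul_eq_mul]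
  by_cases h : j = i
  · subst h; simp
  · simp [h]

lemma upd_self (i : Fin 3) (x : E3) : upd i x (x i) = x := by
  ext j
  rw [upd_apply]
  by_cases h : j = i
  · subst h; simp
  · simp [h]

lemma abs_coord_le_norm (y : E3) (i : Fin 3) : |y i| ≤ ‖y‖ := by
  rw [EuclideanSpace.norm_eq]
  have h : |y i| ^ 2 ≤ ∑ j, ‖y j‖ ^ 2 := by
    have := Finset.single_le_sum (f := fun j => ‖y j‖ ^ 2)
      (fun j _ => by positivity) (Finset.mem_univ i)
    simpa [Real.norm_eq_abs] using this
  calc |y i| = Real.sqrt (|y i| ^ 2) := by rw [Real.sqrt_sq (abs_nonneg _)]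
    _ ≤ _ := Real.sqrt_le_sqrt h

lemma abs_le_integral_abs_deriv {g g' : ℝ → ℝ} (hd : ∀ t, HasDerivAt g (g' t) t)
    (hc : Continuous g') (hsg : HasCompactSupport g) (a : ℝ) :
    |g a| ≤ ∫ t : ℝ, |g' t| := by
  obtain ⟨R, hR⟩ := hsg.isCompact.isBounded.subset_closedBall (0 : ℝ)
  set b := min a (-(R + 1)) with hb
  have hgb : g b = 0 := by
    apply image_eq_zero_of_notMem_tsupport
    intro hmem
    have h1 := hR hmem
    rw [Metric.mem_closedBall, Real.dist_eq, sub_zero] at h1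
    have h2 : b ≤ -(R + 1) := min_le_right _ _
    have h3 : -R ≤ b := neg_le_of_abs_le h1
    linarith
  have hg'cc : HasCompactSupport g' := by
    have : g' = deriv g := funext fun t => ((hd t).deriv).symm
    rw [this]; exact hsg.deriv
  have hint2 : Integrable (fun t => |g' t|) :=
    (hc.abs).integrable_of_hasCompactSupport (hg'cc.comp_left (g := abs) abs_zero)
  have hint : ∫ t in b..a, g' t = g a - g b :=
    intervalIntegral.integral_deriv_eq_sub' g (funext fun t => (hd t).deriv)
      (fun t _ => (hd t).differentiableAt) hc.continuousOn
  calc |g a| = |∫ t in b..a, g' t| := by rw [hint, hgb, sub_zero]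
    _ ≤ ∫ t in b..a, |g' t| :=
        intervalIntegral.abs_integral_le_integral_abs (min_le_left _ _)
    _ = ∫ t in Set.Ioc b a, |g' t| := intervalIntegral.integral_of_le (min_le_left _ _)
    _ ≤ ∫ t : ℝ, |g' t| :=
        setIntegral_le_integral hint2 (Filter.Eventually.of_forall fun t => abs_nonneg _)

lemma line_hasDerivAt (i : Fin 3) (x : E3) (t : ℝ) :
    HasDerivAt (fun s => upd i x s) (EuclideanSpace.single i 1) t := by
  have h1 : HasDerivAt (fun s : ℝ => s • (EuclideanSpace.single i (1:ℝ)))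
      (EuclideanSpace.single i 1) t := by
    simpa using (hasDerivAt_id t).smul_const (EuclideanSpace.single i (1:ℝ))
  have h2 := h1.const_add (x - x i • EuclideanSpace.single i 1)
  have heq : (fun s => upd i x s)
      = fun s => (x - x i • EuclideanSpace.single i 1) + s • EuclideanSpace.single i 1 := by
    funext s
    simp only [upd, sub_smul]
    abel
  rw [heq]
  exact h2

/-- 1‑D control of a function by the integral of its partial derivative along a line. -/
lemma ftc_bound {φ : E3 → ℝ} (hφ : ContDiff ℝ (⊤ : ℕ∞) φ) (hs : HasCompactSupport φ)
    (i : Fin 3) (x : E3) :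
    |φ x| ≤ ∫ t : ℝ, |pd i φ (upd i x t)| := by
  set g : ℝ → ℝ := fun t => φ (upd i x t) with hgdef
  have hd : ∀ t, HasDerivAt g (pd i φ (upd i x t)) t := by
    intro t
    exact ((hφ.differentiable (by simp) _).hasFDerivAt.comp_hasDerivAt t (line_hasDerivAt i x t))
  have hcont : Continuous fun t => pd i φ (upd i x t) := by
    have h1 : Continuous (pd i φ) := (pd_contDiff hφ i).continuous
    have h2 : Continuous fun t : ℝ => upd i x t := by
      unfold upd
      exact continuous_const.add ((continuous_id.sub continuous_const).smul continuous_const)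
    exact h1.comp h2
  have hgs : HasCompactSupport g := by
    obtain ⟨R, hR⟩ := hs.isCompact.isBounded.subset_closedBall (0 : E3)
    apply HasCompactSupport.intro (isCompact_Icc (a := -R) (b := R))
    intro t ht
    by_contra hgz
    have hmem : upd i x t ∈ tsupport φ := subset_tsupport φ (by simpa [hgdef] using hgz)
    have h1 := hR hmem
    rw [Metric.mem_closedBall, dist_zero_right] at h1
    have h2 : |t| ≤ R := by
      have h3 := abs_coord_le_norm (upd i x t) i
      rw [upd_apply] at h3
      simp only [if_true, eq_self_iff_true, if_pos] at h3
      linarith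
    exact ht ⟨(abs_le.mp h2).1, (abs_le.mp h2).2⟩
  have := abs_le_integral_abs_deriv hd hcont hgs (x i)
  simpa [hgdef, upd_self] using this

end Chunk3
section Chunk4
open ENNReal

lemma vec3_zero (a b c : ℝ) : vec3 a b c 0 = a := rfl
lemma vec3_one (a b c : ℝ) : vec3 a b c 1 = b := rfl
lemma vec3_two (a b c : ℝ) : vec3 a b c 2 = c := rfl

lemma upd_vec3_zero (a b c s : ℝ) : upd 0 (vec3 a b c) s = vec3 s b c := by
  ext j; rw [upd_apply]; fin_cases j <;> simp [vec3_zero, vec3_one, vec3_two] <;> rfl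

lemma upd_vec3_one (a b c s : ℝ) : upd 1 (vec3 a b c) s = vec3 a s c := by
  ext j; rw [upd_apply]; fin_cases j <;> simp [vec3_zero, vec3_one, vec3_two] <;> rfl

lemma upd_vec3_two (a b c s : ℝ) : upd 2 (vec3 a b c) s = vec3 a b s := by
  ext j; rw [upd_apply]; fin_cases j <;> simp [vec3_zero, vec3_one, vec3_two] <;> rfl

lemma continuous_vec3 : Continuous fun p : ℝ × ℝ × ℝ => vec3 p.1 p.2.1 p.2.2 := by
  unfold vec3
  apply Continuous.comp
  · exact PiLp.continuous_toLp 2 (fun _ : Fin 3 => ℝ)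
  · apply continuous_pi
    intro j
    fin_cases j
    · exact continuous_fst
    · exact continuous_fst.comp continuous_snd
    · exact continuous_snd.comp continuous_snd

/-- Iterated-integral form of the volume on `E3`. -/
lemma lintegral_triple (f : E3 → ENNReal) (hf : Measurable f) :
    ∫⁻ x : E3, f x = ∫⁻ a : ℝ, ∫⁻ b : ℝ, ∫⁻ c : ℝ, f (vec3 a b c) := by
  have hψ := (EuclideanSpace.volume_preserving_symm_measurableEquiv_toLp (Fin 3)).symm
  have hπ := (volume_preserving_piFinSuccAbove (fun _ : Fin 3 => ℝ) 0).symm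
  have hτ := (volume_preserving_finTwoArrow ℝ).symm
  set ψ := (MeasurableEquiv.toLp 2 (Fin 3 → ℝ)).symm
  set pe := MeasurableEquiv.piFinSuccAbove (fun _ : Fin 3 => ℝ) 0
  set τ := MeasurableEquiv.finTwoArrow (α := ℝ)
  have key : ∀ (a b c : ℝ), ψ.symm (pe.symm (a, τ.symm (b, c))) = vec3 a b c := by
    intro a b c
    ext j
    fin_cases j <;> rfl
  have h1 : ∫⁻ x : E3, f x = ∫⁻ y : Fin 3 → ℝ, f (ψ.symm y) :=
    (hψ.lintegral_comp (hf)).symm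
  have h2 : ∫⁻ y : Fin 3 → ℝ, f (ψ.symm y)
      = ∫⁻ p : ℝ × (Fin 2 → ℝ), f (ψ.symm (pe.symm p)) :=
    (hπ.lintegral_comp (hf.comp ψ.symm.measurable)).symm
  have hm3 : Measurable fun p : ℝ × (Fin 2 → ℝ) => f (ψ.symm (pe.symm p)) :=
    (hf.comp ψ.symm.measurable).comp pe.symm.measurable
  have h3 : ∫⁻ p : ℝ × (Fin 2 → ℝ), f (ψ.symm (pe.symm p))
      = ∫⁻ a : ℝ, ∫⁻ z : Fin 2 → ℝ, f (ψ.symm (pe.symm (a, z))) := by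
    rw [MeasureTheory.Measure.volume_eq_prod]
    exact MeasureTheory.lintegral_prod _ hm3.aemeasurable
  have h4 : ∀ a : ℝ, ∫⁻ z : Fin 2 → ℝ, f (ψ.symm (pe.symm (a, z)))
      = ∫⁻ q : ℝ × ℝ, f (ψ.symm (pe.symm (a, τ.symm q))) := by
    intro a
    exact (hτ.lintegral_comp ((hf.comp ψ.symm.measurable).comp
      (pe.symm.measurable.comp (measurable_const.prodMk measurable_id)))).symm
  have h5 : ∀ a : ℝ, ∫⁻ q : ℝ × ℝ, f (ψ.symm (pe.symm (a, τ.symm q)))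
      = ∫⁻ b : ℝ, ∫⁻ c : ℝ, f (ψ.symm (pe.symm (a, τ.symm (b, c)))) := by
    intro a
    rw [MeasureTheory.Measure.volume_eq_prod]
    exact MeasureTheory.lintegral_prod _
      (((hf.comp ψ.symm.measurable).comp
        (pe.symm.measurable.comp (measurable_const.prodMk measurable_id))).comp
        τ.symm.measurable).aemeasurable
  rw [h1, h2, h3]
  calc ∫⁻ a : ℝ, ∫⁻ z : Fin 2 → ℝ, f (ψ.symm (pe.symm (a, z)))
      = ∫⁻ a : ℝ, ∫⁻ b : ℝ, ∫⁻ c : ℝ, f (ψ.symm (pe.symm (a, τ.symm (b, c)))) := by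
        congr 1; funext a; rw [h4 a, h5 a]
    _ = ∫⁻ a : ℝ, ∫⁻ b : ℝ, ∫⁻ c : ℝ, f (vec3 a b c) := by
        simp only [key]

lemma lintegral_triple_swap_left {k : ℝ → ℝ → ℝ → ENNReal}
    (hk : Measurable fun p : ℝ × ℝ × ℝ => k p.1 p.2.1 p.2.2) :
    ∫⁻ b : ℝ, ∫⁻ c : ℝ, ∫⁻ s : ℝ, k s b c = ∫⁻ s : ℝ, ∫⁻ b : ℝ, ∫⁻ c : ℝ, k s b c := by
  have h1 : ∀ b : ℝ, ∫⁻ c : ℝ, ∫⁻ s : ℝ, k s b c = ∫⁻ s : ℝ, ∫⁻ c : ℝ, k s b c := by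
    intro b
    apply MeasureTheory.lintegral_lintegral_swap
    apply Measurable.aemeasurable
    exact hk.comp (measurable_snd.prodMk (measurable_const.prodMk measurable_fst))
  calc ∫⁻ b : ℝ, ∫⁻ c : ℝ, ∫⁻ s : ℝ, k s b c
      = ∫⁻ b : ℝ, ∫⁻ s : ℝ, ∫⁻ c : ℝ, k s b c := by
        congr 1; funext b; exact h1 b
    _ = ∫⁻ s : ℝ, ∫⁻ b : ℝ, ∫⁻ c : ℝ, k s b c := by
        apply MeasureTheory.lintegral_lintegral_swap
        apply Measurable.aemeasurable
        show Measurable fun p : ℝ × ℝ => ∫⁻ c : ℝ, k p.2 p.1 c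
        exact Measurable.lintegral_prod_right'
          (f := fun q : (ℝ × ℝ) × ℝ => k q.1.2 q.1.1 q.2)
          (hk.comp ((measurable_snd.comp measurable_fst).prodMk
            ((measurable_fst.comp measurable_fst).prodMk measurable_snd)))
end Chunk4
section Chunk5
open ENNReal

lemma slice_cont {G : E3 → ℝ} (hG : Continuous G) (i : Fin 3) (x : E3) :
    Continuous fun t : ℝ => G (upd i x t) := by
  apply hG.comp
  unfold upd
  exact continuous_const.add ((continuous_id.sub continuous_const).smul continuous_const)

lemma slice_hcs {G : E3 → ℝ} (hGs : HasCompactSupport G) (i : Fin 3) (x : E3) :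
    HasCompactSupport fun t : ℝ => G (upd i x t) := by
  obtain ⟨R, hR⟩ := hGs.isCompact.isBounded.subset_closedBall (0 : E3)
  apply HasCompactSupport.intro (isCompact_Icc (a := -R) (b := R))
  intro t ht
  by_contra hgz
  have hmem : upd i x t ∈ tsupport G := subset_tsupport G hgz
  have h1 := hR hmem
  rw [Metric.mem_closedBall, dist_zero_right] at h1
  have h3 := abs_coord_le_norm (upd i x t) i
  rw [upd_apply] at h3
  simp only [if_true, eq_self_iff_true, if_pos] at h3
  exact ht ⟨(abs_le.mp (h3.trans h1)).1, (abs_le.mp (h3.trans h1)).2⟩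

set_option maxHeartbeats 2000000 in
/-- The key anisotropic (Ladyzhenskaya-type) inequality. -/
lemma master {Q H : E3 → ℝ} (hQ : ContDiff ℝ (⊤ : ℕ∞) Q) (hQs : HasCompactSupport Q)
    (hH : ContDiff ℝ (⊤ : ℕ∞) H) (hHs : HasCompactSupport H)
    (hQ0 : ∀ x, 0 ≤ Q x) (hH0 : ∀ x, 0 ≤ H x) :
    ∫ x : E3, Q x * H x ≤
      (∫ x : E3, |pd 2 (pd 1 Q) x|) * (∫ x : E3, |pd 0 H x|) := by
  set F2 : E3 → ℝ := fun x => |pd 2 (pd 1 Q) x| with hF2def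
  set F1 : E3 → ℝ := fun x => |pd 0 H x| with hF1def
  have hF2c : Continuous F2 := ((pd_contDiff (pd_contDiff hQ 1) 2).continuous).abs
  have hF1c : Continuous F1 := ((pd_contDiff hH 0).continuous).abs
  have hF2s : HasCompactSupport F2 :=
    (pd_hcs (pd_hcs hQs 1) 2).comp_left (g := abs) abs_zero
  have hF1s : HasCompactSupport F1 :=
    (pd_hcs hHs 0).comp_left (g := abs) abs_zero
  have hF2i : Integrable F2 := hF2c.integrable_of_hasCompactSupport hF2s
  have hF1i : Integrable F1 := hF1c.integrable_of_hasCompactSupport hF1s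
  set I2 : ℝ := ∫ x : E3, F2 x with hI2def
  set I1 : ℝ := ∫ x : E3, F1 x with hI1def
  have hI2nn : 0 ≤ I2 := integral_nonneg fun x => abs_nonneg _
  have hI1nn : 0 ≤ I1 := integral_nonneg fun x => abs_nonneg _
  -- pointwise bounds
  have p1 : ∀ a b c : ℝ, ENNReal.ofReal (H (vec3 a b c)) ≤
      ∫⁻ s : ℝ, ENNReal.ofReal (F1 (vec3 s b c)) := by
    intro a b c
    have h1 : H (vec3 a b c) ≤ ∫ t : ℝ, F1 (upd 0 (vec3 a b c) t) := by
      have := ftc_bound hH hHs 0 (vec3 a b c)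
      rwa [abs_of_nonneg (hH0 _)] at this
    have h2 : (fun t => F1 (upd 0 (vec3 a b c) t)) = fun t => F1 (vec3 t b c) := by
      funext t; rw [upd_vec3_zero]
    rw [h2] at h1
    refine le_trans (ENNReal.ofReal_le_ofReal h1) ?_
    rw [MeasureTheory.ofReal_integral_eq_lintegral_ofReal]
    · have hi : Integrable (fun t : ℝ => F1 (upd 0 (vec3 0 b c) t)) :=
        (slice_cont hF1c 0 (vec3 0 b c)).integrable_of_hasCompactSupport
          (slice_hcs hF1s 0 (vec3 0 b c))
      exact hi.congr (by filter_upwards with t; rw [upd_vec3_zero])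
    · exact Filter.Eventually.of_forall fun t => abs_nonneg _
  have p2 : ∀ a b c : ℝ, ENNReal.ofReal (Q (vec3 a b c)) ≤
      ∫⁻ s : ℝ, ∫⁻ r : ℝ, ENNReal.ofReal (F2 (vec3 a s r)) := by
    intro a b c
    have h1 : Q (vec3 a b c) ≤ ∫ s : ℝ, |pd 1 Q (vec3 a s c)| := by
      have := ftc_bound hQ hQs 1 (vec3 a b c)
      rw [abs_of_nonneg (hQ0 _)] at this
      refine this.trans (le_of_eq ?_)
      congr 1; funext s; rw [upd_vec3_one]
    have h1' : ENNReal.ofReal (Q (vec3 a b c)) ≤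
        ∫⁻ s : ℝ, ENNReal.ofReal (|pd 1 Q (vec3 a s c)|) := by
      refine le_trans (ENNReal.ofReal_le_ofReal h1) ?_
      rw [MeasureTheory.ofReal_integral_eq_lintegral_ofReal]
      · have hi : Integrable (fun s : ℝ => |pd 1 Q (upd 1 (vec3 a b c) s)|) :=
          (slice_cont ((pd_contDiff hQ 1).continuous.abs) 1
            (vec3 a b c)).integrable_of_hasCompactSupport
            (slice_hcs ((pd_hcs hQs 1).comp_left (g := abs) abs_zero) 1 (vec3 a b c))
        exact hi.congr (by filter_upwards with s; rw [upd_vec3_one])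
      · exact Filter.Eventually.of_forall fun t => abs_nonneg _
    refine h1'.trans (MeasureTheory.lintegral_mono fun s => ?_)
    have h2 : |pd 1 Q (vec3 a s c)| ≤ ∫ r : ℝ, F2 (vec3 a s r) := by
      have := ftc_bound (pd_contDiff hQ 1) (pd_hcs hQs 1) 2 (vec3 a s c)
      refine this.trans (le_of_eq ?_)
      congr 1; funext r; rw [upd_vec3_two]
    refine le_trans (ENNReal.ofReal_le_ofReal h2) ?_
    rw [MeasureTheory.ofReal_integral_eq_lintegral_ofReal]
    · have hi : Integrable (fun r : ℝ => F2 (upd 2 (vec3 a s c) r)) :=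
        (slice_cont hF2c 2 (vec3 a s c)).integrable_of_hasCompactSupport
          (slice_hcs hF2s 2 (vec3 a s c))
      exact hi.congr (by filter_upwards with r; rw [upd_vec3_two])
    · exact Filter.Eventually.of_forall fun t => abs_nonneg _
  -- measurable kernels
  have hk1c : Continuous fun p : ℝ × ℝ × ℝ => ENNReal.ofReal (F1 (vec3 p.1 p.2.1 p.2.2)) :=
    ENNReal.continuous_ofReal.comp (hF1c.comp continuous_vec3)
  have hk2c : Continuous fun p : ℝ × ℝ × ℝ => ENNReal.ofReal (F2 (vec3 p.1 p.2.1 p.2.2)) :=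
    ENNReal.continuous_ofReal.comp (hF2c.comp continuous_vec3)
  -- Ã and D̃
  set At : ℝ → ℝ → ℝ≥0∞ := fun b c => ∫⁻ s : ℝ, ENNReal.ofReal (F1 (vec3 s b c)) with hAt
  set Dt : ℝ → ℝ≥0∞ := fun a => ∫⁻ s : ℝ, ∫⁻ r : ℝ, ENNReal.ofReal (F2 (vec3 a s r)) with hDt
  have hAtm : Measurable fun p : ℝ × ℝ => At p.1 p.2 :=
    Measurable.lintegral_prod_left'
      (f := fun q : ℝ × ℝ × ℝ => ENNReal.ofReal (F1 (vec3 q.1 q.2.1 q.2.2)))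
      hk1c.measurable
  have hAtm2 : ∀ b : ℝ, Measurable fun c : ℝ => At b c := by
    intro b
    exact hAtm.comp (measurable_const.prodMk measurable_id)
  have hDtm : Measurable Dt := by
    apply Measurable.lintegral_prod_right'
      (f := fun p : ℝ × ℝ => ∫⁻ r : ℝ, ENNReal.ofReal (F2 (vec3 p.1 p.2 r)))
    apply Measurable.lintegral_prod_right'
      (f := fun p : (ℝ × ℝ) × ℝ => ENNReal.ofReal (F2 (vec3 p.1.1 p.1.2 p.2)))
    exact hk2c.measurable.comp
      ((measurable_fst.comp measurable_fst).prodMk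
        ((measurable_snd.comp measurable_fst).prodMk measurable_snd))
  -- value of the two iterated integrals
  have hDval : ∫⁻ a : ℝ, Dt a = ENNReal.ofReal I2 := by
    rw [hI2def, MeasureTheory.ofReal_integral_eq_lintegral_ofReal hF2i
      (Filter.Eventually.of_forall fun x => abs_nonneg _)]
    rw [show (fun a : E3 => ENNReal.ofReal (F2 a)) = fun a : E3 => ENNReal.ofReal (F2 a) from rfl,
      lintegral_triple (fun x : E3 => ENNReal.ofReal (F2 x))
        (ENNReal.continuous_ofReal.measurable.comp hF2c.measurable)]
  have hAval : ∫⁻ b : ℝ, ∫⁻ c : ℝ, At b c = ENNReal.ofReal I1 := by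
    rw [hI1def, MeasureTheory.ofReal_integral_eq_lintegral_ofReal hF1i
      (Filter.Eventually.of_forall fun x => abs_nonneg _)]
    rw [lintegral_triple (fun x : E3 => ENNReal.ofReal (F1 x))
        (ENNReal.continuous_ofReal.measurable.comp hF1c.measurable)]
    exact lintegral_triple_swap_left (k := fun s b c =>
      ENNReal.ofReal (F1 (vec3 s b c))) hk1c.measurable
  -- main lintegral bound
  have hQHc : Continuous fun x : E3 => Q x * H x := hQ.continuous.mul hH.continuous
  have hQHs : HasCompactSupport fun x : E3 => Q x * H x := hQs.mul_right
  have hQHi : Integrable (fun x : E3 => Q x * H x) :=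
    hQHc.integrable_of_hasCompactSupport hQHs
  have hmain : ∫⁻ x : E3, ENNReal.ofReal (Q x * H x) ≤
      ENNReal.ofReal I2 * ENNReal.ofReal I1 := by
    rw [lintegral_triple (fun x : E3 => ENNReal.ofReal (Q x * H x))
      (ENNReal.continuous_ofReal.measurable.comp hQHc.measurable)]
    have step1 : ∀ a b c : ℝ, ENNReal.ofReal (Q (vec3 a b c) * H (vec3 a b c)) ≤
        Dt a * At b c := by
      intro a b c
      rw [ENNReal.ofReal_mul (hQ0 _)]
      exact mul_le_mul' (p2 a b c) (p1 a b c)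
    calc ∫⁻ a : ℝ, ∫⁻ b : ℝ, ∫⁻ c : ℝ, ENNReal.ofReal (Q (vec3 a b c) * H (vec3 a b c))
        ≤ ∫⁻ a : ℝ, ∫⁻ b : ℝ, ∫⁻ c : ℝ, Dt a * At b c := by
          refine MeasureTheory.lintegral_mono fun a => ?_
          refine MeasureTheory.lintegral_mono fun b => ?_
          exact MeasureTheory.lintegral_mono fun c => step1 a b c
      _ = ∫⁻ a : ℝ, Dt a * ∫⁻ b : ℝ, ∫⁻ c : ℝ, At b c := by
          congr 1; funext a
          calc ∫⁻ b : ℝ, ∫⁻ c : ℝ, Dt a * At b c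
              = ∫⁻ b : ℝ, Dt a * ∫⁻ c : ℝ, At b c := by
                congr 1; funext b
                exact MeasureTheory.lintegral_const_mul _ (hAtm2 b)
            _ = Dt a * ∫⁻ b : ℝ, ∫⁻ c : ℝ, At b c := by
                apply MeasureTheory.lintegral_const_mul
                exact Measurable.lintegral_prod_right'
                  (f := fun p : ℝ × ℝ => At p.1 p.2) hAtm
      _ = (∫⁻ a : ℝ, Dt a) * (∫⁻ b : ℝ, ∫⁻ c : ℝ, At b c) := by
          exact MeasureTheory.lintegral_mul_const _ hDtm
      _ = ENNReal.ofReal I2 * ENNReal.ofReal I1 := by rw [hDval, hAval]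
  -- convert back to real integrals
  rw [MeasureTheory.integral_eq_lintegral_of_nonneg_ae
    (Filter.Eventually.of_forall fun x => mul_nonneg (hQ0 x) (hH0 x))
    hQHi.aestronglyMeasurable]
  calc (∫⁻ x : E3, ENNReal.ofReal (Q x * H x)).toReal
      ≤ (ENNReal.ofReal I2 * ENNReal.ofReal I1).toReal := by
        apply ENNReal.toReal_mono
        · exact ENNReal.mul_ne_top ENNReal.ofReal_ne_top ENNReal.ofReal_ne_top
        · exact hmain
    _ = I2 * I1 := by
        rw [ENNReal.toReal_mul, ENNReal.toReal_ofReal hI2nn, ENNReal.toReal_ofReal hI1nn]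

end Chunk5
section Chunk6
open RealInnerProductSpace

variable {F G : Type*} [NormedAddCommGroup F] [NormedSpace ℝ F]
  [NormedAddCommGroup G] [NormedSpace ℝ G]

lemma HsobSq_nonneg (m : ℕ) (f : E3 → F) : 0 ≤ HsobSq m f :=
  Finset.sum_nonneg fun _ _ => integral_nonneg fun x => by positivity

lemma sq_integral_le_HsobSq {f : E3 → F} {g : E3 → G} (hf : ContDiff ℝ (⊤ : ℕ∞) f)
    (hfs : HasCompactSupport f) {k m : ℕ} (hkm : k ≤ m)
    (hpt : ∀ x, ‖g x‖ ≤ ‖iteratedFDeriv ℝ k f x‖) :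
    ∫ x : E3, ‖g x‖ ^ 2 ≤ HsobSq m f := by
  have hic : Continuous (iteratedFDeriv ℝ k f) := hf.continuous_iteratedFDeriv (by exact_mod_cast le_top)
  have h1 : Integrable (fun x : E3 => ‖iteratedFDeriv ℝ k f x‖ ^ 2) :=
    integrable_norm_sq hic (hfs.iteratedFDeriv k)
  have h2 : ∫ x : E3, ‖g x‖ ^ 2 ≤ ∫ x : E3, ‖iteratedFDeriv ℝ k f x‖ ^ 2 := by
    refine integral_mono_of_nonneg (Filter.Eventually.of_forall fun x => by positivity) h1
      (Filter.Eventually.of_forall fun x => ?_)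
    show ‖g x‖ ^ 2 ≤ ‖iteratedFDeriv ℝ k f x‖ ^ 2
    exact pow_le_pow_left₀ (norm_nonneg _) (hpt x) 2
  refine h2.trans ?_
  unfold HsobSq
  exact Finset.single_le_sum (f := fun j => ∫ x : E3, ‖iteratedFDeriv ℝ j f x‖ ^ 2)
    (fun j _ => integral_nonneg fun x => by positivity)
    (Finset.mem_range.mpr (Nat.lt_succ_of_le hkm))

lemma dot3_eq_inner (v w : E3) : dot3 v w = ⟪v, w⟫ := by
  rw [PiLp.inner_apply]
  unfold dot3
  refine Finset.sum_congr rfl fun i _ => ?_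
  simp [RCLike.inner_apply, mul_comm]

lemma pd_inner {f g : E3 → E3} (hf : ContDiff ℝ (⊤ : ℕ∞) f) (hg : ContDiff ℝ (⊤ : ℕ∞) g) (i : Fin 3) :
    pd i (fun x => (⟪f x, g x⟫ : ℝ)) =
      fun x => (⟪f x, pd i g x⟫ : ℝ) + ⟪pd i f x, g x⟫ := by
  funext x
  exact fderiv_inner_apply ℝ (hf.differentiable (by simp) x)
    (hg.differentiable (by simp) x) _

lemma inner_smooth {f g : E3 → E3} (hf : ContDiff ℝ (⊤ : ℕ∞) f) (hg : ContDiff ℝ (⊤ : ℕ∞) g) :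
    ContDiff ℝ (⊤ : ℕ∞) (fun x => (⟪f x, g x⟫ : ℝ)) :=
  hf.inner ℝ hg

lemma inner_hcs {f g : E3 → E3} (hfs : HasCompactSupport f) :
    HasCompactSupport (fun x => (⟪f x, g x⟫ : ℝ)) := by
  apply HasCompactSupport.intro hfs.isCompact
  intro x hx
  have : f x = 0 := image_eq_zero_of_notMem_tsupport hx
  rw [this, inner_zero_left]

set_option maxHeartbeats 4000000 in
/-- Estimate for `|∫ ∂^γ(div u) (B·∂^γ B) dx|` with `|γ| = 3`. -/
theorem divergence_magnetic_estimate :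
    ∃ C : ℝ, 0 < C ∧ ∀ u B : E3 → E3,
      ContDiff ℝ (⊤ : ℕ∞) u → HasCompactSupport u →
      ContDiff ℝ (⊤ : ℕ∞) B → HasCompactSupport B →
      ∀ γ : List (Fin 3), γ.length = 3 →
      |∫ x : E3, pdL γ (div3 u) x * dot3 (B x) (pdL γ B x)| ≤
        C * Hsob 3 B * gradhH 3 B * gradH 3 u := by
  refine ⟨6, by norm_num, ?_⟩
  intro u B hu hus hB hBs γ hγ
  set h : E3 → E3 := pdL γ B with hhdef
  set P : E3 → ℝ := pdL γ (div3 u) with hPdef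
  have hh : ContDiff ℝ (⊤ : ℕ∞) h := pdL_contDiff hB γ
  have hhs : HasCompactSupport h := pdL_hcs hBs γ
  -- abbreviations
  set a : ℝ := Hsob 3 B with hadef
  set g : ℝ := gradhH 3 B with hgdef
  set U : ℝ := gradH 3 u with hUdef
  have hAnn : 0 ≤ HsobSq 3 B := HsobSq_nonneg 3 B
  have hGnn : 0 ≤ gradhHSq 3 B :=
    add_nonneg (HsobSq_nonneg 3 (pd 0 B)) (HsobSq_nonneg 3 (pd 1 B))
  have hUnn : 0 ≤ gradHSq 3 u :=
    Finset.sum_nonneg fun i _ => HsobSq_nonneg 3 (pd i u)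
  have ha0 : 0 ≤ a := Real.sqrt_nonneg _
  have hg0 : 0 ≤ g := Real.sqrt_nonneg _
  have hU0 : 0 ≤ U := Real.sqrt_nonneg _
  have haSq : a ^ 2 = HsobSq 3 B := Real.sq_sqrt hAnn
  have hgSq : g ^ 2 = gradhHSq 3 B := Real.sq_sqrt hGnn
  have hUSq : U ^ 2 = gradHSq 3 u := Real.sq_sqrt hUnn
  -- component L² bounds (B side)
  have ihB : ∫ x : E3, ‖B x‖ ^ 2 ≤ a ^ 2 := by
    rw [haSq]
    exact sq_integral_le_HsobSq hB hBs (Nat.zero_le 3)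
      (fun x => by rw [norm_iteratedFDeriv_zero])
  have ipd2B : ∫ x : E3, ‖pd 2 B x‖ ^ 2 ≤ a ^ 2 := by
    rw [haSq]
    exact sq_integral_le_HsobSq hB hBs (by norm_num : 1 ≤ 3)
      (fun x => norm_pdL_le hB [2] x)
  have ih3 : ∫ x : E3, ‖h x‖ ^ 2 ≤ a ^ 2 := by
    rw [haSq]
    refine sq_integral_le_HsobSq hB hBs (le_refl 3) (fun x => ?_)
    have := norm_pdL_le hB γ x
    rwa [hγ] at this
  have ipd1B : ∫ x : E3, ‖pd 1 B x‖ ^ 2 ≤ g ^ 2 := by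
    rw [hgSq]
    refine le_trans ?_ (le_add_of_nonneg_left (HsobSq_nonneg 3 (pd 0 B)))
    exact sq_integral_le_HsobSq (pd_contDiff hB 1) (pd_hcs hBs 1) (Nat.zero_le 3)
      (fun x => by rw [norm_iteratedFDeriv_zero])
  have ipd21B : ∫ x : E3, ‖pd 2 (pd 1 B) x‖ ^ 2 ≤ g ^ 2 := by
    rw [hgSq]
    refine le_trans ?_ (le_add_of_nonneg_left (HsobSq_nonneg 3 (pd 0 B)))
    exact sq_integral_le_HsobSq (pd_contDiff hB 1) (pd_hcs hBs 1) (by norm_num : 1 ≤ 3)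
      (fun x => norm_pdL_le (pd_contDiff hB 1) [2] x)
  have ipd0h : ∫ x : E3, ‖pd 0 h x‖ ^ 2 ≤ g ^ 2 := by
    rw [hgSq]
    refine le_trans ?_ (le_add_of_nonneg_right (HsobSq_nonneg 3 (pd 1 B)))
    have hcomm : pd 0 h = pdL γ (pd 0 B) := pd_pdL_comm hB 0 γ
    rw [hcomm]
    refine sq_integral_le_HsobSq (pd_contDiff hB 0) (pd_hcs hBs 0) (le_refl 3) (fun x => ?_)
    have := norm_pdL_le (pd_contDiff hB 0) γ x
    rwa [hγ] at this
  -- Q and H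
  set Q : E3 → ℝ := fun x => (⟪B x, B x⟫ : ℝ) with hQdef
  set H : E3 → ℝ := fun x => (⟪h x, h x⟫ : ℝ) with hHdef
  have hQ : ContDiff ℝ (⊤ : ℕ∞) Q := inner_smooth hB hB
  have hH : ContDiff ℝ (⊤ : ℕ∞) H := inner_smooth hh hh
  have hQs : HasCompactSupport Q := inner_hcs hBs
  have hHs : HasCompactSupport H := inner_hcs hhs
  have hQ0 : ∀ x, 0 ≤ Q x := fun x => real_inner_self_nonneg
  have hH0 : ∀ x, 0 ≤ H x := fun x => real_inner_self_nonneg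
  have hQnorm : ∀ x, Q x = ‖B x‖ ^ 2 := fun x => real_inner_self_eq_norm_sq _
  have hHnorm : ∀ x, H x = ‖h x‖ ^ 2 := fun x => real_inner_self_eq_norm_sq _
  -- T1 : ∫ |pd 0 H|
  have hcn : ∀ (f : E3 → E3), Continuous f → HasCompactSupport f →
      Continuous (fun x => ‖f x‖) ∧ HasCompactSupport (fun x => ‖f x‖) :=
    fun f hc hs => ⟨hc.norm, hs.comp_left (g := fun v : E3 => ‖v‖) norm_zero⟩
  have hT1 : ∫ x : E3, |pd 0 H x| ≤ 2 * (a * g) := by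
    have hpd0H : pd 0 H = fun x => (⟪h x, pd 0 h x⟫ : ℝ) + ⟪pd 0 h x, h x⟫ :=
      pd_inner hh hh 0
    have hpt : ∀ x, |pd 0 H x| ≤ 2 * (‖h x‖ * ‖pd 0 h x‖) := by
      intro x
      rw [hpd0H]
      calc |(⟪h x, pd 0 h x⟫ : ℝ) + ⟪pd 0 h x, h x⟫|
          ≤ |(⟪h x, pd 0 h x⟫ : ℝ)| + |(⟪pd 0 h x, h x⟫ : ℝ)| := abs_add_le _ _
        _ ≤ ‖h x‖ * ‖pd 0 h x‖ + ‖pd 0 h x‖ * ‖h x‖ :=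
            add_le_add (abs_real_inner_le_norm _ _) (abs_real_inner_le_norm _ _)
        _ = 2 * (‖h x‖ * ‖pd 0 h x‖) := by ring
    have hnc := hcn h hh.continuous hhs
    have hnc0 := hcn (pd 0 h) (pd_contDiff hh 0).continuous (pd_hcs hhs 0)
    have hint : Integrable (fun x : E3 => ‖h x‖ * ‖pd 0 h x‖) :=
      (hnc.1.mul hnc0.1).integrable_of_hasCompactSupport hnc0.2.mul_left
    have step1 : ∫ x : E3, |pd 0 H x| ≤ ∫ x : E3, 2 * (‖h x‖ * ‖pd 0 h x‖) :=
      integral_mono_of_nonneg (Filter.Eventually.of_forall fun x => abs_nonneg _)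
        (hint.const_mul 2) (Filter.Eventually.of_forall hpt)
    have step2 : ∫ x : E3, 2 * (‖h x‖ * ‖pd 0 h x‖) = 2 * ∫ x : E3, ‖h x‖ * ‖pd 0 h x‖ :=
      integral_const_mul 2 _
    have step3 : ∫ x : E3, ‖h x‖ * ‖pd 0 h x‖ ≤ a * g := by
      have hCS := integral_abs_mul_le hnc.1 hnc.2 hnc0.1 hnc0.2
      have heq : ∫ x : E3, |‖h x‖ * ‖pd 0 h x‖| = ∫ x : E3, ‖h x‖ * ‖pd 0 h x‖ := by
        congr 1; funext x; exact abs_of_nonneg (by positivity)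
      rw [heq] at hCS
      refine hCS.trans (mul_le_mul ?_ ?_ (Real.sqrt_nonneg _) ha0)
      · calc Real.sqrt (∫ x : E3, ‖h x‖ ^ 2) ≤ Real.sqrt (a ^ 2) := Real.sqrt_le_sqrt ih3
          _ = a := Real.sqrt_sq ha0
      · calc Real.sqrt (∫ x : E3, ‖pd 0 h x‖ ^ 2) ≤ Real.sqrt (g ^ 2) :=
              Real.sqrt_le_sqrt ipd0h
          _ = g := Real.sqrt_sq hg0
    calc ∫ x : E3, |pd 0 H x| ≤ 2 * ∫ x : E3, ‖h x‖ * ‖pd 0 h x‖ := by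
          rw [← step2]; exact step1
      _ ≤ 2 * (a * g) := by linarith
  -- T2 : ∫ |pd 2 (pd 1 Q)|
  have hT2 : ∫ x : E3, |pd 2 (pd 1 Q) x| ≤ 4 * (a * g) := by
    have hpd1Q : pd 1 Q = fun x => (⟪B x, pd 1 B x⟫ : ℝ) + ⟪pd 1 B x, B x⟫ :=
      pd_inner hB hB 1
    have hs1 : ContDiff ℝ (⊤ : ℕ∞) (fun x => (⟪B x, pd 1 B x⟫ : ℝ)) :=
      inner_smooth hB (pd_contDiff hB 1)
    have hs2 : ContDiff ℝ (⊤ : ℕ∞) (fun x => (⟪pd 1 B x, B x⟫ : ℝ)) :=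
      inner_smooth (pd_contDiff hB 1) hB
    have hpd21Q : pd 2 (pd 1 Q) = fun x =>
        ((⟪B x, pd 2 (pd 1 B) x⟫ : ℝ) + ⟪pd 2 B x, pd 1 B x⟫)
        + ((⟪pd 1 B x, pd 2 B x⟫ : ℝ) + ⟪pd 2 (pd 1 B) x, B x⟫) := by
      rw [hpd1Q, pd_fun_add hs1 hs2 2, pd_inner hB (pd_contDiff hB 1) 2,
        pd_inner (pd_contDiff hB 1) hB 2]
    have hpt : ∀ x, |pd 2 (pd 1 Q) x| ≤
        2 * (‖B x‖ * ‖pd 2 (pd 1 B) x‖) + 2 * (‖pd 2 B x‖ * ‖pd 1 B x‖) := by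
      intro x
      rw [hpd21Q]
      have e1 := abs_real_inner_le_norm (B x) (pd 2 (pd 1 B) x)
      have e2 := abs_real_inner_le_norm (pd 2 B x) (pd 1 B x)
      have e3 := abs_real_inner_le_norm (pd 1 B x) (pd 2 B x)
      have e4 := abs_real_inner_le_norm (pd 2 (pd 1 B) x) (B x)
      calc |((⟪B x, pd 2 (pd 1 B) x⟫ : ℝ) + ⟪pd 2 B x, pd 1 B x⟫)
          + ((⟪pd 1 B x, pd 2 B x⟫ : ℝ) + ⟪pd 2 (pd 1 B) x, B x⟫)|
          ≤ |(⟪B x, pd 2 (pd 1 B) x⟫ : ℝ)| + |(⟪pd 2 B x, pd 1 B x⟫ : ℝ)|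
            + (|(⟪pd 1 B x, pd 2 B x⟫ : ℝ)| + |(⟪pd 2 (pd 1 B) x, B x⟫ : ℝ)|) := by
              refine (abs_add_le _ _).trans ?_
              exact add_le_add (abs_add_le _ _) (abs_add_le _ _)
        _ ≤ 2 * (‖B x‖ * ‖pd 2 (pd 1 B) x‖) + 2 * (‖pd 2 B x‖ * ‖pd 1 B x‖) := by
              rw [mul_comm ‖pd 1 B x‖ ‖pd 2 B x‖] at e3
              rw [mul_comm ‖pd 2 (pd 1 B) x‖ ‖B x‖] at e4
              linarith
    have hncB := hcn B hB.continuous hBs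
    have hnc21 := hcn (pd 2 (pd 1 B)) (pd_contDiff (pd_contDiff hB 1) 2).continuous
      (pd_hcs (pd_hcs hBs 1) 2)
    have hnc2 := hcn (pd 2 B) (pd_contDiff hB 2).continuous (pd_hcs hBs 2)
    have hnc1 := hcn (pd 1 B) (pd_contDiff hB 1).continuous (pd_hcs hBs 1)
    have hint1 : Integrable (fun x : E3 => ‖B x‖ * ‖pd 2 (pd 1 B) x‖) :=
      (hncB.1.mul hnc21.1).integrable_of_hasCompactSupport hnc21.2.mul_left
    have hint2 : Integrable (fun x : E3 => ‖pd 2 B x‖ * ‖pd 1 B x‖) :=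
      (hnc2.1.mul hnc1.1).integrable_of_hasCompactSupport hnc1.2.mul_left
    have step1 : ∫ x : E3, |pd 2 (pd 1 Q) x| ≤
        ∫ x : E3, (2 * (‖B x‖ * ‖pd 2 (pd 1 B) x‖) + 2 * (‖pd 2 B x‖ * ‖pd 1 B x‖)) :=
      integral_mono_of_nonneg (Filter.Eventually.of_forall fun x => abs_nonneg _)
        ((hint1.const_mul 2).add (hint2.const_mul 2)) (Filter.Eventually.of_forall hpt)
    have step2 : ∫ x : E3, (2 * (‖B x‖ * ‖pd 2 (pd 1 B) x‖) + 2 * (‖pd 2 B x‖ * ‖pd 1 B x‖))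
        = 2 * (∫ x : E3, ‖B x‖ * ‖pd 2 (pd 1 B) x‖) + 2 * ∫ x : E3, ‖pd 2 B x‖ * ‖pd 1 B x‖ := by
      rw [integral_add (hint1.const_mul 2) (hint2.const_mul 2),
        integral_const_mul, integral_const_mul]
    have step3 : ∫ x : E3, ‖B x‖ * ‖pd 2 (pd 1 B) x‖ ≤ a * g := by
      have hCS := integral_abs_mul_le hncB.1 hncB.2 hnc21.1 hnc21.2
      have heq : ∫ x : E3, |‖B x‖ * ‖pd 2 (pd 1 B) x‖|
          = ∫ x : E3, ‖B x‖ * ‖pd 2 (pd 1 B) x‖ := by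
        congr 1; funext x; exact abs_of_nonneg (by positivity)
      rw [heq] at hCS
      refine hCS.trans (mul_le_mul ?_ ?_ (Real.sqrt_nonneg _) ha0)
      · calc Real.sqrt (∫ x : E3, ‖B x‖ ^ 2) ≤ Real.sqrt (a ^ 2) := Real.sqrt_le_sqrt ihB
          _ = a := Real.sqrt_sq ha0
      · calc Real.sqrt (∫ x : E3, ‖pd 2 (pd 1 B) x‖ ^ 2) ≤ Real.sqrt (g ^ 2) :=
              Real.sqrt_le_sqrt ipd21B
          _ = g := Real.sqrt_sq hg0
    have step4 : ∫ x : E3, ‖pd 2 B x‖ * ‖pd 1 B x‖ ≤ a * g := by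
      have hCS := integral_abs_mul_le hnc2.1 hnc2.2 hnc1.1 hnc1.2
      have heq : ∫ x : E3, |‖pd 2 B x‖ * ‖pd 1 B x‖|
          = ∫ x : E3, ‖pd 2 B x‖ * ‖pd 1 B x‖ := by
        congr 1; funext x; exact abs_of_nonneg (by positivity)
      rw [heq] at hCS
      refine hCS.trans (mul_le_mul ?_ ?_ (Real.sqrt_nonneg _) ha0)
      · calc Real.sqrt (∫ x : E3, ‖pd 2 B x‖ ^ 2) ≤ Real.sqrt (a ^ 2) :=
              Real.sqrt_le_sqrt ipd2B
          _ = a := Real.sqrt_sq ha0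
      · calc Real.sqrt (∫ x : E3, ‖pd 1 B x‖ ^ 2) ≤ Real.sqrt (g ^ 2) :=
              Real.sqrt_le_sqrt ipd1B
          _ = g := Real.sqrt_sq hg0
    calc ∫ x : E3, |pd 2 (pd 1 Q) x|
        ≤ 2 * (∫ x : E3, ‖B x‖ * ‖pd 2 (pd 1 B) x‖) + 2 * ∫ x : E3, ‖pd 2 B x‖ * ‖pd 1 B x‖ := by
          rw [← step2]; exact step1
      _ ≤ 4 * (a * g) := by linarith
  -- the product bound via the master inequality
  have hQHi : Integrable (fun x : E3 => Q x * H x) :=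
    (hQ.continuous.mul hH.continuous).integrable_of_hasCompactSupport hQs.mul_right
  have hQH : ∫ x : E3, Q x * H x ≤ 8 * (a * g) ^ 2 := by
    refine (master hQ hQs hH hHs hQ0 hH0).trans ?_
    have h1nn : 0 ≤ ∫ x : E3, |pd 0 H x| := integral_nonneg fun x => abs_nonneg _
    calc (∫ x : E3, |pd 2 (pd 1 Q) x|) * ∫ x : E3, |pd 0 H x|
        ≤ (4 * (a * g)) * (2 * (a * g)) :=
          mul_le_mul hT2 hT1 h1nn (by positivity)
      _ = 8 * (a * g) ^ 2 := by ring
  -- S² ≤ Q·H and conclusion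
  have hS2le : ∫ x : E3, dot3 (B x) (h x) ^ 2 ≤ 8 * (a * g) ^ 2 := by
    refine le_trans ?_ hQH
    refine integral_mono_of_nonneg (Filter.Eventually.of_forall fun x => by positivity) hQHi
      (Filter.Eventually.of_forall fun x => ?_)
    show dot3 (B x) (h x) ^ 2 ≤ Q x * H x
    rw [dot3_eq_inner, hQnorm, hHnorm]
    have e := abs_real_inner_le_norm (B x) (h x)
    have e2 : (⟪B x, h x⟫ : ℝ) ^ 2 = |(⟪B x, h x⟫ : ℝ)| ^ 2 := (sq_abs _).symm
    rw [e2]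
    calc |(⟪B x, h x⟫ : ℝ)| ^ 2 ≤ (‖B x‖ * ‖h x‖) ^ 2 := by
          have := abs_nonneg ((⟪B x, h x⟫ : ℝ))
          nlinarith
      _ = ‖B x‖ ^ 2 * ‖h x‖ ^ 2 := by ring
  -- divergence side
  have hdiv_eq : div3 u = fun x =>
      (EuclideanSpace.proj (0 : Fin 3) : E3 →L[ℝ] ℝ) (pd 0 u x)
      + ((EuclideanSpace.proj (1 : Fin 3) : E3 →L[ℝ] ℝ) (pd 1 u x)
        + (EuclideanSpace.proj (2 : Fin 3) : E3 →L[ℝ] ℝ) (pd 2 u x)) := by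
    funext x
    show (∑ i, pd i u x i) = _
    rw [Fin.sum_univ_three]
    ring_nf
    rfl
  have hsum_sm : ∀ i : Fin 3, ContDiff ℝ (⊤ : ℕ∞)
      (fun x => (EuclideanSpace.proj (i : Fin 3) : E3 →L[ℝ] ℝ) (pd i u x)) :=
    fun i => (EuclideanSpace.proj (i : Fin 3) : E3 →L[ℝ] ℝ).contDiff.comp (pd_contDiff hu i)
  have hsum_cc : ∀ i : Fin 3, HasCompactSupport
      (fun x => (EuclideanSpace.proj (i : Fin 3) : E3 →L[ℝ] ℝ) (pd i u x)) :=
    fun i => (pd_hcs hus i).comp_left (map_zero _)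
  have hdiv_sm : ContDiff ℝ (⊤ : ℕ∞) (div3 u) := by
    rw [hdiv_eq]; exact (hsum_sm 0).add ((hsum_sm 1).add (hsum_sm 2))
  have hdiv_cc : HasCompactSupport (div3 u) := by
    rw [hdiv_eq]; exact (hsum_cc 0).add ((hsum_cc 1).add (hsum_cc 2))
  have hP_eq : P = fun x =>
      (EuclideanSpace.proj (0 : Fin 3) : E3 →L[ℝ] ℝ) (pdL γ (pd 0 u) x)
      + ((EuclideanSpace.proj (1 : Fin 3) : E3 →L[ℝ] ℝ) (pdL γ (pd 1 u) x)
        + (EuclideanSpace.proj (2 : Fin 3) : E3 →L[ℝ] ℝ) (pdL γ (pd 2 u) x)) := by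
    rw [hPdef, hdiv_eq,
      pdL_fun_add (hsum_sm 0) ((hsum_sm 1).add (hsum_sm 2)) γ]
    funext x
    rw [pdL_fun_add (hsum_sm 1) (hsum_sm 2) γ]
    rw [pdL_clm_comp (pd_contDiff hu 0) _ γ, pdL_clm_comp (pd_contDiff hu 1) _ γ,
      pdL_clm_comp (pd_contDiff hu 2) _ γ]
  have hP2 : ∫ x : E3, P x ^ 2 ≤ 3 * gradHSq 3 u := by
    have hApt : ∀ x, |P x| ≤ ‖iteratedFDeriv ℝ 3 (pd 0 u) x‖
        + ‖iteratedFDeriv ℝ 3 (pd 1 u) x‖ + ‖iteratedFDeriv ℝ 3 (pd 2 u) x‖ := by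
      intro x
      rw [hP_eq]
      have b0 : |(EuclideanSpace.proj (0 : Fin 3) : E3 →L[ℝ] ℝ) (pdL γ (pd 0 u) x)|
          ≤ ‖iteratedFDeriv ℝ 3 (pd 0 u) x‖ := by
        refine (abs_coord_le_norm (pdL γ (pd 0 u) x) 0).trans ?_
        have := norm_pdL_le (pd_contDiff hu 0) γ x
        rwa [hγ] at this
      have b1 : |(EuclideanSpace.proj (1 : Fin 3) : E3 →L[ℝ] ℝ) (pdL γ (pd 1 u) x)|
          ≤ ‖iteratedFDeriv ℝ 3 (pd 1 u) x‖ := by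
        refine (abs_coord_le_norm (pdL γ (pd 1 u) x) 1).trans ?_
        have := norm_pdL_le (pd_contDiff hu 1) γ x
        rwa [hγ] at this
      have b2 : |(EuclideanSpace.proj (2 : Fin 3) : E3 →L[ℝ] ℝ) (pdL γ (pd 2 u) x)|
          ≤ ‖iteratedFDeriv ℝ 3 (pd 2 u) x‖ := by
        refine (abs_coord_le_norm (pdL γ (pd 2 u) x) 2).trans ?_
        have := norm_pdL_le (pd_contDiff hu 2) γ x
        rwa [hγ] at this
      calc |(EuclideanSpace.proj (0 : Fin 3) : E3 →L[ℝ] ℝ) (pdL γ (pd 0 u) x)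
          + ((EuclideanSpace.proj (1 : Fin 3) : E3 →L[ℝ] ℝ) (pdL γ (pd 1 u) x)
            + (EuclideanSpace.proj (2 : Fin 3) : E3 →L[ℝ] ℝ) (pdL γ (pd 2 u) x))|
          ≤ |(EuclideanSpace.proj (0 : Fin 3) : E3 →L[ℝ] ℝ) (pdL γ (pd 0 u) x)|
            + (|(EuclideanSpace.proj (1 : Fin 3) : E3 →L[ℝ] ℝ) (pdL γ (pd 1 u) x)|
              + |(EuclideanSpace.proj (2 : Fin 3) : E3 →L[ℝ] ℝ) (pdL γ (pd 2 u) x)|) :=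
            (abs_add_le _ _).trans (add_le_add_right (abs_add_le _ _) _)
        _ ≤ _ := by linarith
    have hAi : ∀ i : Fin 3, Integrable
        (fun x : E3 => ‖iteratedFDeriv ℝ 3 (pd i u) x‖ ^ 2) := fun i =>
      integrable_norm_sq ((pd_contDiff hu i).continuous_iteratedFDeriv (WithTop.coe_le_coe.mpr le_top))
        ((pd_hcs hus i).iteratedFDeriv 3)
    have step1 : ∫ x : E3, P x ^ 2 ≤ ∫ x : E3,
        3 * (‖iteratedFDeriv ℝ 3 (pd 0 u) x‖ ^ 2 + ‖iteratedFDeriv ℝ 3 (pd 1 u) x‖ ^ 2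
          + ‖iteratedFDeriv ℝ 3 (pd 2 u) x‖ ^ 2) := by
      refine integral_mono_of_nonneg (Filter.Eventually.of_forall fun x => by positivity)
        ((((hAi 0).add (hAi 1)).add (hAi 2)).const_mul 3)
        (Filter.Eventually.of_forall fun x => ?_)
      show P x ^ 2 ≤ 3 * (‖iteratedFDeriv ℝ 3 (pd 0 u) x‖ ^ 2
        + ‖iteratedFDeriv ℝ 3 (pd 1 u) x‖ ^ 2 + ‖iteratedFDeriv ℝ 3 (pd 2 u) x‖ ^ 2)
      have := hApt x
      have h0 := abs_nonneg (P x)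
      have n0 := norm_nonneg (iteratedFDeriv ℝ 3 (pd 0 u) x)
      have n1 := norm_nonneg (iteratedFDeriv ℝ 3 (pd 1 u) x)
      have n2 := norm_nonneg (iteratedFDeriv ℝ 3 (pd 2 u) x)
      have hsq : P x ^ 2 = |P x| ^ 2 := (sq_abs _).symm
      have hPP := pow_le_pow_left₀ h0 this 2
      rw [hsq]
      nlinarith [sq_nonneg (‖iteratedFDeriv ℝ 3 (pd 0 u) x‖ - ‖iteratedFDeriv ℝ 3 (pd 1 u) x‖),
        sq_nonneg (‖iteratedFDeriv ℝ 3 (pd 0 u) x‖ - ‖iteratedFDeriv ℝ 3 (pd 2 u) x‖),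
        sq_nonneg (‖iteratedFDeriv ℝ 3 (pd 1 u) x‖ - ‖iteratedFDeriv ℝ 3 (pd 2 u) x‖)]
    have step2 : ∫ x : E3,
        3 * (‖iteratedFDeriv ℝ 3 (pd 0 u) x‖ ^ 2 + ‖iteratedFDeriv ℝ 3 (pd 1 u) x‖ ^ 2
          + ‖iteratedFDeriv ℝ 3 (pd 2 u) x‖ ^ 2)
        = 3 * ((∫ x : E3, ‖iteratedFDeriv ℝ 3 (pd 0 u) x‖ ^ 2)
          + (∫ x : E3, ‖iteratedFDeriv ℝ 3 (pd 1 u) x‖ ^ 2)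
          + ∫ x : E3, ‖iteratedFDeriv ℝ 3 (pd 2 u) x‖ ^ 2) := by
      have i01 : Integrable (fun x : E3 => ‖iteratedFDeriv ℝ 3 (pd 0 u) x‖ ^ 2
          + ‖iteratedFDeriv ℝ 3 (pd 1 u) x‖ ^ 2) := (hAi 0).add (hAi 1)
      rw [integral_const_mul, integral_add i01 (hAi 2), integral_add (hAi 0) (hAi 1)]
    have hterm : ∀ i : Fin 3, ∫ x : E3, ‖iteratedFDeriv ℝ 3 (pd i u) x‖ ^ 2
        ≤ HsobSq 3 (pd i u) := fun i =>
      sq_integral_le_HsobSq (pd_contDiff hu i) (pd_hcs hus i) (le_refl 3) (fun x => le_refl _)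
    have hgrad : gradHSq 3 u = HsobSq 3 (pd 0 u) + HsobSq 3 (pd 1 u) + HsobSq 3 (pd 2 u) := by
      unfold gradHSq
      rw [Fin.sum_univ_three]
    rw [step2] at step1
    rw [hgrad]
    have := hterm 0
    have := hterm 1
    have := hterm 2
    linarith
  -- continuity/support of P and S
  have hPc : Continuous P := (pdL_contDiff hdiv_sm γ).continuous
  have hPs : HasCompactSupport P := pdL_hcs hdiv_cc γ
  have hSc : Continuous fun x => dot3 (B x) (h x) := by
    have : (fun x => dot3 (B x) (h x)) = fun x => (⟪B x, h x⟫ : ℝ) := by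
      funext x; exact dot3_eq_inner _ _
    rw [this]
    exact (inner_smooth hB hh).continuous
  have hSs : HasCompactSupport fun x => dot3 (B x) (h x) := by
    have : (fun x => dot3 (B x) (h x)) = fun x => (⟪B x, h x⟫ : ℝ) := by
      funext x; exact dot3_eq_inner _ _
    rw [this]
    exact inner_hcs hBs
  -- final chain
  have hsq1 : Real.sqrt (∫ x : E3, P x ^ 2) ≤ 2 * U := by
    have hle : ∫ x : E3, P x ^ 2 ≤ (2 * U) ^ 2 := by
      rw [show ((2:ℝ) * U) ^ 2 = 4 * U ^ 2 by ring, hUSq]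
      linarith
    calc Real.sqrt (∫ x : E3, P x ^ 2) ≤ Real.sqrt ((2 * U) ^ 2) := Real.sqrt_le_sqrt hle
      _ = 2 * U := Real.sqrt_sq (by positivity)
  have hsq2 : Real.sqrt (∫ x : E3, dot3 (B x) (h x) ^ 2) ≤ 3 * (a * g) := by
    have hle : ∫ x : E3, dot3 (B x) (h x) ^ 2 ≤ (3 * (a * g)) ^ 2 := by
      refine hS2le.trans ?_
      nlinarith [sq_nonneg (a * g)]
    calc Real.sqrt (∫ x : E3, dot3 (B x) (h x) ^ 2) ≤ Real.sqrt ((3 * (a * g)) ^ 2) :=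
          Real.sqrt_le_sqrt hle
      _ = 3 * (a * g) := Real.sqrt_sq (by positivity)
  calc |∫ x : E3, P x * dot3 (B x) (h x)|
      = ‖∫ x : E3, P x * dot3 (B x) (h x)‖ := (Real.norm_eq_abs _).symm
    _ ≤ ∫ x : E3, ‖P x * dot3 (B x) (h x)‖ := norm_integral_le_integral_norm _
    _ = ∫ x : E3, |P x * dot3 (B x) (h x)| := by
        simp only [Real.norm_eq_abs]
    _ ≤ Real.sqrt (∫ x : E3, P x ^ 2) * Real.sqrt (∫ x : E3, dot3 (B x) (h x) ^ 2) :=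
        integral_abs_mul_le hPc hPs hSc hSs
    _ ≤ (2 * U) * (3 * (a * g)) :=
        mul_le_mul hsq1 hsq2 (Real.sqrt_nonneg _) (by positivity)
    _ = 6 * a * g * U := by ring

end Chunk6
end
end
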